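/- arXiv:1001.4684 — 8 statements merged into one kernel-verified Lean document; each statement's English description precedes it below -/
import Mathlib

section
/- If Γ is a Gamma random variable with shape parameter α+β and rate λ, and B is a Beta(α,β) random variable independent of Γ, then the product Γ·B has the same distribution as a Gamma random variable with shape parameter α and rate λ. -/
/-!
By independence, the law of `G * B` is the multiplicative convolution of the two laws, whose
density at `z` is `∫ f_{α+β}(x) b(z/x) |x|⁻¹ dx`. The Beta factor splits
`x ^ (α + β - 1)` into `z ^ (α - 1) (x - z) ^ (β - 1)`, so the integrand is
`f_α(z) f_β(x - z)` (both sides vanish unless `0 < z < x`), and integrating out `x` leaves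
`f_α(z)` times the total mass `1` of the Gamma(β, λ) density.
-/

open MeasureTheory ProbabilityTheory Real Filter Topology Set
open scoped ENNReal

/-- Density (w.r.t. Lebesgue measure) of the Beta(a,b) distribution. -/
noncomputable def betaPDF' (a b : ℝ) (x : ℝ) : ℝ≥0∞ :=
  if x ∈ Set.Ioo (0 : ℝ) 1 then
    ENNReal.ofReal (Real.Gamma (a + b) / (Real.Gamma a * Real.Gamma b)
      * x ^ (a - 1) * (1 - x) ^ (b - 1))
  else 0

/-- Density (w.r.t. Lebesgue measure) of the Gamma distribution with shape `a` and rate `r`. -/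
noncomputable def gammaPDF' (a r : ℝ) (x : ℝ) : ℝ≥0∞ :=
  if 0 < x then
    ENNReal.ofReal (r ^ a * x ^ (a - 1) * Real.exp (-(r * x)) / Real.Gamma a)
  else 0

theorem Real.lintegral_comp_mul_left {h : ℝ → ℝ≥0∞} (hh : Measurable h) {a : ℝ} (ha : a ≠ 0) :
    ∫⁻ y, h (a * y) = ENNReal.ofReal |a⁻¹| * ∫⁻ z, h z := by
  rw [← lintegral_map hh (measurable_const_mul a), Real.map_volume_mul_left ha,
    lintegral_smul_measure, smul_eq_mul]

theorem Real.withDensity_mconv_withDensity {f g : ℝ → ℝ≥0∞} (hf : Measurable f)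
    (hg : Measurable g) :
    volume.withDensity f ∗ₘ volume.withDensity g =
      volume.withDensity fun z ↦ ∫⁻ x, f x * g (z / x) * ENNReal.ofReal |x⁻¹| := by
  refine Measure.ext_of_lintegral _ fun φ hφ ↦ ?_
  have h_inner : ∀ x ≠ 0, ∫⁻ y, f x * g y * φ (x * y) =
      ∫⁻ z, f x * g (z / x) * ENNReal.ofReal |x⁻¹| * φ z := by
    intro x hx
    have := Real.lintegral_comp_mul_left (h := fun z ↦ f x * g (z / x) * φ z) (by fun_prop) hx
    simp only [mul_div_cancel_left₀ _ hx] at this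
    rw [this, ← lintegral_const_mul _ (by fun_prop)]
    congr 1 with z
    ring
  calc ∫⁻ z, φ z ∂(volume.withDensity f ∗ₘ volume.withDensity g)
      = ∫⁻ x, ∫⁻ y, f x * g y * φ (x * y) := by
        rw [Measure.lintegral_mconv_eq_lintegral_prod hφ, prod_withDensity hf hg,
          lintegral_withDensity_eq_lintegral_mul _ (by fun_prop) (by fun_prop),
          lintegral_prod _ (by fun_prop)]
        rfl
    _ = ∫⁻ x, ∫⁻ z, f x * g (z / x) * ENNReal.ofReal |x⁻¹| * φ z := by
        refine lintegral_congr_ae ?_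
        filter_upwards [Measure.ae_ne volume 0] with x hx using h_inner x hx
    _ = ∫⁻ z, (∫⁻ x, f x * g (z / x) * ENNReal.ofReal |x⁻¹|) * φ z := by
        rw [lintegral_lintegral_swap (by fun_prop)]
        congr 1 with z
        rw [lintegral_mul_const _ (by fun_prop)]
    _ = _ := by
        rw [lintegral_withDensity_eq_lintegral_mul _ (by fun_prop) hφ]
        rfl

@[fun_prop]
theorem measurable_gammaPDF' (a r : ℝ) : Measurable (gammaPDF' a r) :=
  Measurable.ite measurableSet_Ioi (by fun_prop) measurable_const

@[fun_prop]
theorem measurable_betaPDF' (a b : ℝ) : Measurable (betaPDF' a b) :=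
  Measurable.ite measurableSet_Ioo (by fun_prop) measurable_const

theorem gammaPDF'_of_nonpos {a r x : ℝ} (hx : ¬ 0 < x) : gammaPDF' a r x = 0 :=
  if_neg hx

theorem betaPDF'_of_notMem {a b x : ℝ} (hx : x ∉ Ioo (0 : ℝ) 1) : betaPDF' a b x = 0 :=
  if_neg hx

theorem gammaPDF'_ae_eq_gammaPDF (a r : ℝ) : gammaPDF' a r =ᵐ[volume] gammaPDF a r := by
  filter_upwards [Measure.ae_ne volume 0] with x hx
  rcases hx.lt_or_gt with hneg | hpos
  · rw [gammaPDF'_of_nonpos hneg.not_gt, gammaPDF_of_neg hneg]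
  · rw [gammaPDF', if_pos hpos, gammaPDF_of_nonneg hpos.le]
    ring_nf

theorem lintegral_gammaPDF'_eq_one {a r : ℝ} (ha : 0 < a) (hr : 0 < r) :
    ∫⁻ x, gammaPDF' a r x = 1 := by
  rw [lintegral_congr_ae (gammaPDF'_ae_eq_gammaPDF a r), lintegral_gammaPDF_eq_one ha hr]

theorem gammaPDF'_add_mul_betaPDF'_div {α β lam : ℝ} (hα : 0 < α) (hβ : 0 < β) (hlam : 0 < lam)
    (x z : ℝ) :
    gammaPDF' (α + β) lam x * betaPDF' α β (z / x) * ENNReal.ofReal |x⁻¹| =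
      gammaPDF' α lam z * gammaPDF' β lam (x - z) := by
  by_cases h : 0 < z ∧ z < x
  · obtain ⟨hz, hzx⟩ := h
    obtain ⟨d, hd, rfl⟩ : ∃ d, 0 < d ∧ x = z + d := ⟨x - z, sub_pos.mpr hzx, by ring⟩
    have hx : 0 < z + d := by positivity
    have hmem : z / (z + d) ∈ Ioo (0 : ℝ) 1 := ⟨div_pos hz hx, (div_lt_one hx).mpr hzx⟩
    rw [gammaPDF', if_pos hx, betaPDF', if_pos hmem, gammaPDF', if_pos hz, gammaPDF',
      add_sub_cancel_left, if_pos hd, abs_of_pos (inv_pos.mpr hx), one_sub_div hx.ne',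
      add_sub_cancel_left, ← ENNReal.ofReal_mul (by positivity),
      ← ENNReal.ofReal_mul (by positivity), ← ENNReal.ofReal_mul (by positivity)]
    congr 1
    have hΓ := (Gamma_pos_of_pos (add_pos hα hβ)).ne'
    have hxα := (rpow_pos_of_pos hx (α - 1)).ne'
    have hxβ := (rpow_pos_of_pos hx (β - 1)).ne'
    rw [div_rpow hz.le hx.le, div_rpow hd.le hx.le,
      show α + β - 1 = (α - 1) + (β - 1) + 1 by ring, rpow_add hx, rpow_add hx, rpow_one,
      rpow_add hlam, mul_add lam, neg_add, exp_add]
    field_simp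
  · have h_rhs : gammaPDF' α lam z * gammaPDF' β lam (x - z) = 0 := by
      rcases not_and_or.mp h with hz | hxz
      · rw [gammaPDF'_of_nonpos hz, zero_mul]
      · rw [gammaPDF'_of_nonpos (by linarith : ¬ 0 < x - z), mul_zero]
    rw [h_rhs]
    by_cases hx : 0 < x
    · rw [betaPDF'_of_notMem fun hmem ↦ h ⟨(div_pos_iff_of_pos_right hx).mp hmem.1,
        (div_lt_one hx).mp hmem.2⟩, mul_zero, zero_mul]
    · rw [gammaPDF'_of_nonpos hx, zero_mul, zero_mul]

theorem gamma_beta_product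
    {Ω : Type*} [MeasurableSpace Ω] (P : Measure Ω) [IsProbabilityMeasure P]
    (α β lam : ℝ) (hα : 0 < α) (hβ : 0 < β) (hlam : 0 < lam)
    (G B : Ω → ℝ) (hG : Measurable G) (hB : Measurable B)
    (hind : IndepFun G B P)
    (hGlaw : Measure.map G P = volume.withDensity (gammaPDF' (α + β) lam))
    (hBlaw : Measure.map B P = volume.withDensity (betaPDF' α β)) :
    Measure.map (fun ω => G ω * B ω) P = volume.withDensity (gammaPDF' α lam) := by
  rw [show (fun ω => G ω * B ω) = G * B from rfl, hind.map_mul_eq_map_mconv_map hG hB, hGlaw,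
    hBlaw, Real.withDensity_mconv_withDensity (by fun_prop) (by fun_prop)]
  congr 1 with z
  simp_rw [gammaPDF'_add_mul_betaPDF'_div hα hβ hlam]
  rw [lintegral_const_mul _ (by fun_prop),
    lintegral_sub_right_eq_self (gammaPDF' β lam), lintegral_gammaPDF'_eq_one hβ hlam, mul_one]
end

section
/- If B₁ is Beta(α,β) distributed and B₂ is Beta(α+β,γ) distributed with B₁ and B₂ independent, then the product B₁·B₂ has the Beta(α, β+γ) distribution. -/
/-!
By independence, the law of `B₁ * B₂` is the multiplicative convolution of the two laws, whose
density at `z` is `∫ f (z / y) g y / |y| dy`. For Beta densities this integrand factors as the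
Beta(α, β + γ) density at `z` times `1 / (1 - z)` times the Beta(β, γ) density at
`(y - z) / (1 - z)`, because `B(α, β) B(α + β, γ) = B(α, β + γ) B(β, γ)`; the last factor
integrates to `1 - z` in `y`.
-/

open MeasureTheory ProbabilityTheory Real Filter Topology Set
open scoped ENNReal

/-- Density (w.r.t. Lebesgue measure) of the Beta(a,b) distribution. -/
noncomputable def betaPDF (a b : ℝ) (x : ℝ) : ℝ≥0∞ :=
  if x ∈ Set.Ioo (0 : ℝ) 1 then
    ENNReal.ofReal (Real.Gamma (a + b) / (Real.Gamma a * Real.Gamma b)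
      * x ^ (a - 1) * (1 - x) ^ (b - 1))
  else 0

lemma betaPDF_eq_probabilityTheory_betaPDF (a b : ℝ) :
    _root_.betaPDF a b = ProbabilityTheory.betaPDF a b := by
  ext x
  rw [_root_.betaPDF, ProbabilityTheory.betaPDF_eq, ProbabilityTheory.beta, one_div_div]
  split_ifs <;> simp_all

lemma Real.lintegral_comp_mul_right (f : ℝ → ℝ≥0∞) {a : ℝ} (ha : a ≠ 0) :
    ∫⁻ x, f (x * a) = ENNReal.ofReal |a⁻¹| * ∫⁻ x, f x := by
  rw [← smul_eq_mul, ← lintegral_smul_measure, ← Real.map_volume_mul_right ha,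
    (measurableEmbedding_mulRight₀ ha).lintegral_map f]

theorem Real.mconv_withDensity {f g : ℝ → ℝ≥0∞} (hf : Measurable f) (hg : Measurable g) :
    volume.withDensity f ∗ₘ volume.withDensity g
      = volume.withDensity fun z ↦ ∫⁻ y, f (z / y) * g y * ENNReal.ofReal |y⁻¹| := by
  refine Measure.ext_of_lintegral _ fun φ hφ ↦ ?_
  have hinner : ∀ y ≠ 0, ∫⁻ x, f x * g y * φ (x * y)
      = ∫⁻ z, f (z / y) * g y * ENNReal.ofReal |y⁻¹| * φ z := by
    intro y hy
    have h := Real.lintegral_comp_mul_right (fun z ↦ f (z / y) * g y * φ z) hy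
    simp only [mul_div_cancel_right₀ _ hy] at h
    rw [h, ← lintegral_const_mul' _ _ ENNReal.ofReal_ne_top]
    refine lintegral_congr fun z ↦ ?_
    ring
  calc ∫⁻ z, φ z ∂(volume.withDensity f ∗ₘ volume.withDensity g)
      = ∫⁻ y, ∫⁻ x, f x * g y * φ (x * y) := by
        rw [Measure.lintegral_mconv_eq_lintegral_prod hφ, prod_withDensity hf hg,
          lintegral_withDensity_eq_lintegral_mul _ (by fun_prop) (by fun_prop),
          lintegral_prod_symm _ (by fun_prop)]
        rfl
    _ = ∫⁻ y, ∫⁻ z, f (z / y) * g y * ENNReal.ofReal |y⁻¹| * φ z :=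
        lintegral_congr_ae <| (volume.ae_ne 0).mono hinner
    _ = ∫⁻ z, (∫⁻ y, f (z / y) * g y * ENNReal.ofReal |y⁻¹|) * φ z := by
        rw [lintegral_lintegral_swap (by fun_prop)]
        refine lintegral_congr fun z ↦ lintegral_mul_const _ ?_
        fun_prop
    _ = _ := (lintegral_withDensity_eq_lintegral_mul _
          (Measurable.lintegral_prod_right (by fun_prop)) hφ).symm

lemma Real.lintegral_comp_sub_div (f : ℝ → ℝ≥0∞) (b : ℝ) {c : ℝ} (hc : c ≠ 0) :
    ∫⁻ x, f ((x - b) / c) = ENNReal.ofReal |c| * ∫⁻ x, f x := by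
  simp_rw [div_eq_mul_inv]
  rw [lintegral_sub_right_eq_self (fun x ↦ f (x * c⁻¹)) b,
    Real.lintegral_comp_mul_right f (inv_ne_zero hc), inv_inv]

namespace ProbabilityTheory

variable {α β γ : ℝ}

@[fun_prop]
lemma measurable_betaPDF (α β : ℝ) : Measurable (betaPDF α β) :=
  (measurable_betaPDFReal α β).ennreal_ofReal

lemma betaPDF_eq_zero_of_notMem_Ioo {x : ℝ} (hx : x ∉ Ioo 0 1) : betaPDF α β x = 0 := by
  rw [betaPDF_eq, if_neg (show ¬(0 < x ∧ x < 1) from hx), ENNReal.ofReal_zero]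

lemma beta_mul_beta_add (hα : 0 < α) (hβ : 0 < β) (hγ : 0 < γ) :
    beta α β * beta (α + β) γ = beta α (β + γ) * beta β γ := by
  have := (Gamma_pos_of_pos (add_pos hα hβ)).ne'
  have := (Gamma_pos_of_pos (add_pos hβ hγ)).ne'
  simp only [beta, ← add_assoc]
  field_simp

lemma betaPDF_div_mul_betaPDF_of_lt (hα : 0 < α) (hβ : 0 < β) (hγ : 0 < γ) {z y : ℝ}
    (hz : 0 < z) (hzy : z < y) (hy : y < 1) :
    betaPDF α β (z / y) * betaPDF (α + β) γ y * ENNReal.ofReal |y⁻¹|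
      = betaPDF α (β + γ) z * betaPDF β γ ((y - z) / (1 - z)) * ENNReal.ofReal |(1 - z)⁻¹| := by
  have hy0 : 0 < y := hz.trans hzy
  have h1z : 0 < 1 - z := by linarith
  have hyz : 0 < y - z := by linarith
  have h1y : 0 < 1 - y := by linarith
  have := beta_pos hα hβ
  have := beta_pos (add_pos hα hβ) hγ
  have := beta_pos hα (add_pos hβ hγ)
  have := beta_pos hβ hγ
  rw [betaPDF_of_pos_lt_one (div_pos hz hy0) ((div_lt_one hy0).2 hzy),
    betaPDF_of_pos_lt_one hy0 hy, betaPDF_of_pos_lt_one hz (hzy.trans hy),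
    betaPDF_of_pos_lt_one (div_pos hyz h1z) ((div_lt_one h1z).2 (by linarith)),
    show 1 - z / y = (y - z) / y by field_simp,
    show 1 - (y - z) / (1 - z) = (1 - y) / (1 - z) by field_simp; ring,
    ← ENNReal.ofReal_mul (by positivity), ← ENNReal.ofReal_mul (by positivity),
    ← ENNReal.ofReal_mul (by positivity), ← ENNReal.ofReal_mul (by positivity)]
  congr 1
  rw [div_rpow hz.le hy0.le, div_rpow hyz.le hy0.le, div_rpow hyz.le h1z.le,
    div_rpow h1y.le h1z.le,
    show α + β - 1 = (α - 1) + (β - 1) + 1 by ring, show β + γ - 1 = (β - 1) + (γ - 1) + 1 by ring,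
    rpow_add hy0, rpow_add hy0, rpow_add h1z, rpow_add h1z, rpow_one, rpow_one,
    abs_of_pos (inv_pos.2 hy0), abs_of_pos (inv_pos.2 h1z)]
  field_simp
  exact (beta_mul_beta_add hα hβ hγ).symm

lemma betaPDF_div_mul_betaPDF (hα : 0 < α) (hβ : 0 < β) (hγ : 0 < γ) (z y : ℝ) :
    betaPDF α β (z / y) * betaPDF (α + β) γ y * ENNReal.ofReal |y⁻¹|
      = betaPDF α (β + γ) z * betaPDF β γ ((y - z) / (1 - z)) * ENNReal.ofReal |(1 - z)⁻¹| := by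
  by_cases h : 0 < z ∧ z < y ∧ y < 1
  · exact betaPDF_div_mul_betaPDF_of_lt hα hβ hγ h.1 h.2.1 h.2.2
  · have hL : betaPDF α β (z / y) * betaPDF (α + β) γ y = 0 := by
      by_cases hy : 0 < y ∧ y < 1
      · rw [betaPDF_eq_zero_of_notMem_Ioo (x := z / y), zero_mul]
        rw [mem_Ioo, div_pos_iff_of_pos_right hy.1, div_lt_one hy.1]
        tauto
      · rw [betaPDF_eq_zero_of_notMem_Ioo hy, mul_zero]
    have hR : betaPDF α (β + γ) z * betaPDF β γ ((y - z) / (1 - z)) = 0 := by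
      by_cases hz : 0 < z ∧ z < 1
      · rw [betaPDF_eq_zero_of_notMem_Ioo (x := (y - z) / (1 - z)), mul_zero]
        rw [mem_Ioo, div_pos_iff_of_pos_right (sub_pos.2 hz.2), div_lt_one (sub_pos.2 hz.2), sub_pos]
        grind
      · rw [betaPDF_eq_zero_of_notMem_Ioo hz, zero_mul]
    rw [hL, hR, zero_mul, zero_mul]

lemma lintegral_betaPDF_div_mul_betaPDF (hα : 0 < α) (hβ : 0 < β) (hγ : 0 < γ) (z : ℝ) :
    ∫⁻ y, betaPDF α β (z / y) * betaPDF (α + β) γ y * ENNReal.ofReal |y⁻¹|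
      = betaPDF α (β + γ) z := by
  simp_rw [betaPDF_div_mul_betaPDF hα hβ hγ z, mul_right_comm _ (betaPDF β γ _)]
  rw [lintegral_const_mul _ (by fun_prop)]
  rcases eq_or_ne z 1 with rfl | hz
  · rw [betaPDF_eq_zero_of_one_le le_rfl, zero_mul, zero_mul]
  · have h1z : 1 - z ≠ 0 := sub_ne_zero.2 hz.symm
    rw [Real.lintegral_comp_sub_div _ _ h1z, lintegral_betaPDF_eq_one hβ hγ, mul_one, mul_assoc,
      ← ENNReal.ofReal_mul (abs_nonneg _), ← abs_mul, inv_mul_cancel₀ h1z, abs_one,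
      ENNReal.ofReal_one, mul_one]

end ProbabilityTheory

theorem beta_beta_product
    {Ω : Type*} [MeasurableSpace Ω] (P : Measure Ω) [IsProbabilityMeasure P]
    (α β γ : ℝ) (hα : 0 < α) (hβ : 0 < β) (hγ : 0 < γ)
    (B₁ B₂ : Ω → ℝ) (hB₁ : Measurable B₁) (hB₂ : Measurable B₂)
    (hind : IndepFun B₁ B₂ P)
    (hB₁law : Measure.map B₁ P = volume.withDensity (_root_.betaPDF α β))
    (hB₂law : Measure.map B₂ P = volume.withDensity (_root_.betaPDF (α + β) γ)) :
    Measure.map (fun ω => B₁ ω * B₂ ω) P = volume.withDensity (_root_.betaPDF α (β + γ)) := by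
  simp only [betaPDF_eq_probabilityTheory_betaPDF] at hB₁law hB₂law ⊢
  calc Measure.map (fun ω => B₁ ω * B₂ ω) P = Measure.map B₁ P ∗ₘ Measure.map B₂ P :=
        hind.map_mul_eq_map_mconv_map hB₁ hB₂
    _ = volume.withDensity (ProbabilityTheory.betaPDF α (β + γ)) := by
        rw [hB₁law, hB₂law, Real.mconv_withDensity (measurable_betaPDF _ _) (measurable_betaPDF _ _)]
        simp_rw [lintegral_betaPDF_div_mul_betaPDF hα hβ hγ]
end

section
/- Let R be a positive random variable with distribution function H satisfying H(0)=0, and let S be an independent Beta(α,β) random variable. Then the distribution function H_{α,β} of W = R·S satisfies H_{α,β}(x) = (Γ(α+β)/Γ(α)) x^α · (I_β (p_{-α-β} H))(x) for all x in (0, ω), where ω is the upper endpoint of H. -/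
/-!
Conditioning on `S`, independence gives `P(RS ≤ x) = ∫₀¹ b(s) H(x/s) ds` with `b` the Beta
density. The substitution `y = x/s` maps `(0,1)` onto `(x,∞)`, and the Jacobian `x/s²` combines
with `b(x/y)` into `x^α (y - x)^(β-1) y^(-α-β)` up to the constant `Γ(α+β)/(Γ(α)Γ(β))`.
-/

open MeasureTheory ProbabilityTheory Real Filter Topology Set
open scoped ENNReal

noncomputable def betaDensity (a b s : ℝ) : ℝ :=
  Real.Gamma (a + b) / (Real.Gamma a * Real.Gamma b) * s ^ (a - 1) * (1 - s) ^ (b - 1)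

lemma betaPDF_eq_indicator (a b : ℝ) :
    _root_.betaPDF a b = (Ioo 0 1).indicator fun s => ENNReal.ofReal (betaDensity a b s) := by
  ext s
  simp only [_root_.betaPDF, indicator_apply, betaDensity]

lemma measurable_betaDensity (a b : ℝ) : Measurable (betaDensity a b) := by
  unfold betaDensity
  fun_prop

lemma betaDensity_nonneg {a b s : ℝ} (ha : 0 < a) (hb : 0 < b) (hs : s ∈ Ioo 0 1) :
    0 ≤ betaDensity a b s := by
  have hΓa := Real.Gamma_pos_of_pos ha
  have hΓb := Real.Gamma_pos_of_pos hb
  have hΓab := Real.Gamma_pos_of_pos (add_pos ha hb)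
  have hs0 := hs.1
  have h1s : 0 ≤ 1 - s := by linarith [hs.2]
  unfold betaDensity
  positivity

lemma lintegral_withDensity_betaPDF (a b : ℝ) (g : ℝ → ℝ≥0∞) :
    ∫⁻ s, g s ∂volume.withDensity (_root_.betaPDF a b) =
      ∫⁻ s in Ioo 0 1, ENNReal.ofReal (betaDensity a b s) * g s := by
  have hmeas : Measurable (_root_.betaPDF a b) := by
    rw [betaPDF_eq_indicator]
    exact (measurable_betaDensity a b).ennreal_ofReal.indicator measurableSet_Ioo
  have hfin : ∀ s, _root_.betaPDF a b s < ∞ := fun s => by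
    rw [betaPDF_eq_indicator]
    by_cases hs : s ∈ Ioo (0 : ℝ) 1 <;> simp [hs]
  rw [lintegral_withDensity_eq_lintegral_mul_non_measurable _ hmeas (ae_of_all _ hfin),
    ← lintegral_indicator measurableSet_Ioo]
  congr 1 with s
  by_cases hs : s ∈ Ioo (0 : ℝ) 1 <;> simp [betaPDF_eq_indicator, hs]

section ProductCDF

variable {Ω : Type*} [MeasurableSpace Ω] {P : Measure Ω} {R S : Ω → ℝ}

lemma measure_mul_le_eq_lintegral_map [IsFiniteMeasure P] (hR : Measurable R)
    (hS : Measurable S) (hind : IndepFun R S P) (x : ℝ) :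
    P {ω | R ω * S ω ≤ x} = ∫⁻ s, P.map R {r | r * s ≤ x} ∂P.map S := by
  have hA : MeasurableSet {p : ℝ × ℝ | p.2 * p.1 ≤ x} :=
    measurableSet_le (measurable_snd.mul measurable_fst) measurable_const
  calc P {ω | R ω * S ω ≤ x} = P.map (fun ω => (S ω, R ω)) {p | p.2 * p.1 ≤ x} :=
        (Measure.map_apply (hS.prodMk hR) hA).symm
    _ = ((P.map S).prod (P.map R)) {p | p.2 * p.1 ≤ x} := by
        rw [hind.symm.map_prod_eq_prod_map_map hS.aemeasurable hR.aemeasurable]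
    _ = _ := Measure.prod_apply hA

lemma monotone_measureReal_le [IsFiniteMeasure P] :
    Monotone fun x => P.real {ω | R ω ≤ x} :=
  fun _ _ hab => measureReal_mono fun _ hω => le_trans hω hab

lemma measureReal_mul_le_eq_integral_betaDensity [IsFiniteMeasure P] {α β : ℝ}
    (hα : 0 < α) (hβ : 0 < β) (hR : Measurable R) (hS : Measurable S) (hind : IndepFun R S P)
    (hSlaw : P.map S = volume.withDensity (_root_.betaPDF α β)) (x : ℝ) :
    P.real {ω | R ω * S ω ≤ x} =
      ∫ s in Ioo 0 1, betaDensity α β s * P.real {ω | R ω ≤ x / s} := by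
  have hint_meas : Measurable fun s => betaDensity α β s * P.real {ω | R ω ≤ x / s} :=
    (measurable_betaDensity α β).mul
      (monotone_measureReal_le.measurable.comp (measurable_const.div measurable_id))
  have hint_nonneg : 0 ≤ᵐ[volume.restrict (Ioo 0 1)]
      fun s => betaDensity α β s * P.real {ω | R ω ≤ x / s} :=
    (ae_restrict_iff' measurableSet_Ioo).2 <| ae_of_all _ fun s hs =>
      mul_nonneg (betaDensity_nonneg hα hβ hs) measureReal_nonneg
  rw [integral_eq_lintegral_of_nonneg_ae hint_nonneg hint_meas.aestronglyMeasurable,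
    measureReal_def, measure_mul_le_eq_lintegral_map hR hS hind, hSlaw,
    lintegral_withDensity_betaPDF]
  congr 1
  refine setLIntegral_congr_fun measurableSet_Ioo fun s hs => ?_
  have hset : {r : ℝ | r * s ≤ x} = Iic (x / s) := by
    ext r
    simp [le_div_iff₀ hs.1]
  rw [ENNReal.ofReal_mul (betaDensity_nonneg hα hβ hs), ofReal_measureReal, hset,
    Measure.map_apply hR measurableSet_Iic]
  rfl

end ProductCDF

lemma integral_Ioi_eq_integral_Ioo_div {E : Type*} [NormedAddCommGroup E] [NormedSpace ℝ E]
    {x : ℝ} (hx : 0 < x) (g : ℝ → E) :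
    ∫ y in Ioi x, g y = ∫ s in Ioo 0 1, (x / s ^ 2) • g (x / s) := by
  have himage : (fun s => x / s) '' Ioo 0 1 = Ioi x := by
    ext y
    constructor
    · rintro ⟨s, ⟨hs0, hs1⟩, rfl⟩
      exact (lt_div_iff₀ hs0).2 (mul_lt_of_lt_one_right hx hs1)
    · intro hy
      have hy0 : 0 < y := hx.trans hy
      exact ⟨x / y, ⟨div_pos hx hy0, (div_lt_one hy0).2 hy⟩, by field_simp⟩
  have hderiv : ∀ s ∈ Ioo (0 : ℝ) 1,
      HasDerivWithinAt (fun s => x / s) (-(x / s ^ 2)) (Ioo 0 1) s := fun s hs => by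
    simpa [div_eq_mul_inv] using ((hasDerivAt_inv hs.1.ne').const_mul x).hasDerivWithinAt
  have hinj : InjOn (fun s => x / s) (Ioo 0 1) := fun a _ b _ hab =>
    inv_injective (mul_left_cancel₀ hx.ne' (by simpa only [div_eq_mul_inv] using hab))
  rw [← himage, integral_image_eq_integral_abs_deriv_smul measurableSet_Ioo hderiv hinj]
  refine setIntegral_congr_fun measurableSet_Ioo fun s hs => ?_
  rw [abs_neg, abs_of_pos (by have := hs.1; positivity)]

lemma weyl_kernel_comp_div {α β x s : ℝ} (hx : 0 < x) (hs : s ∈ Ioo 0 1) :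
    x / s ^ 2 * ((x / s - x) ^ (β - 1) * (x / s) ^ (-α - β)) =
      x ^ (-α) * (s ^ (α - 1) * (1 - s) ^ (β - 1)) := by
  obtain ⟨hs0, hs1⟩ := hs
  have h1s : 0 < 1 - s := by linarith
  have hsub : x / s - x = x * (1 - s) / s := by field_simp
  rw [hsub, div_rpow (by positivity) hs0.le, mul_rpow hx.le h1s.le, div_rpow hx.le hs0.le,
    sub_eq_add_neg (-α), rpow_add hx, rpow_add hs0, rpow_neg hx.le, rpow_neg hx.le,
    rpow_neg hs0.le, rpow_neg hs0.le, rpow_sub_one hx.ne', rpow_sub_one hs0.ne' β,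
    rpow_sub_one hs0.ne' α]
  field_simp

lemma integral_Ioi_weyl_eq_integral_Ioo {α β x : ℝ} (hx : 0 < x) (h : ℝ → ℝ) :
    ∫ y in Ioi x, (y - x) ^ (β - 1) * (y ^ (-α - β) * h y) =
      x ^ (-α) * ∫ s in Ioo 0 1, s ^ (α - 1) * (1 - s) ^ (β - 1) * h (x / s) := by
  rw [integral_Ioi_eq_integral_Ioo_div hx, ← integral_const_mul]
  refine setIntegral_congr_fun measurableSet_Ioo fun s hs => ?_
  calc (x / s ^ 2) • ((x / s - x) ^ (β - 1) * ((x / s) ^ (-α - β) * h (x / s)))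
      = x / s ^ 2 * ((x / s - x) ^ (β - 1) * (x / s) ^ (-α - β)) * h (x / s) := by
        rw [smul_eq_mul]; ring
    _ = _ := by rw [weyl_kernel_comp_div hx hs]; ring

theorem beta_product_convolution_weyl_general
    {Ω : Type*} [MeasurableSpace Ω] (P : Measure Ω) [IsProbabilityMeasure P]
    (α β : ℝ) (hα : 0 < α) (hβ : 0 < β)
    (R S : Ω → ℝ) (hR : Measurable R) (hS : Measurable S)
    (hind : IndepFun R S P)
    (hSlaw : Measure.map S P = volume.withDensity (_root_.betaPDF α β))
    -- `H` is the distribution function of `R`, `Hab` that of `W = R·S`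
    (H Hab : ℝ → ℝ)
    (hH : ∀ x, H x = (P {ω | R ω ≤ x}).toReal)
    (hHab : ∀ x, Hab x = (P {ω | R ω * S ω ≤ x}).toReal)
    -- `ϖ` is the upper endpoint of `H`
    (ϖ : ℝ≥0∞) :
    ∀ x : ℝ, 0 < x → ENNReal.ofReal x < ϖ →
      Hab x = Real.Gamma (α + β) / Real.Gamma α * x ^ α *
        ((1 / Real.Gamma β) * ∫ y in Set.Ioi x, (y - x) ^ (β - 1) * (y ^ (-α - β) * H y)) := by
  intro x hx _
  have hH_real : H = fun y => P.real {ω | R ω ≤ y} := funext hH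
  rw [hHab, ← measureReal_def,
    measureReal_mul_le_eq_integral_betaDensity hα hβ hR hS hind hSlaw,
    integral_Ioi_weyl_eq_integral_Ioo hx, hH_real]
  simp only [betaDensity, mul_assoc]
  rw [integral_const_mul, rpow_neg hx.le]
  have hΓβ := (Real.Gamma_pos_of_pos hβ).ne'
  have hxα := (rpow_pos_of_pos hx α).ne'
  field_simp

theorem beta_product_convolution_weyl
    {Ω : Type*} [MeasurableSpace Ω] (P : Measure Ω) [IsProbabilityMeasure P]
    (α β : ℝ) (hα : 0 < α) (hβ : 0 < β)
    (R S : Ω → ℝ) (hR : Measurable R) (hS : Measurable S)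
    (hRpos : ∀ᵐ ω ∂P, 0 < R ω)
    (hind : IndepFun R S P)
    (hSlaw : Measure.map S P = volume.withDensity (_root_.betaPDF α β))
    -- `H` is the distribution function of `R`, `Hab` that of `W = R·S`
    (H Hab : ℝ → ℝ)
    (hH : ∀ x, H x = (P {ω | R ω ≤ x}).toReal)
    (hHab : ∀ x, Hab x = (P {ω | R ω * S ω ≤ x}).toReal)
    -- `ϖ` is the upper endpoint of `H`
    (ϖ : ℝ≥0∞) (hϖ : ∀ x : ℝ, ENNReal.ofReal x < ϖ ↔ H x < 1) :
    ∀ x : ℝ, 0 < x → ENNReal.ofReal x < ϖ →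
      Hab x = Real.Gamma (α + β) / Real.Gamma α * x ^ α *
        ((1 / Real.Gamma β) * ∫ y in Set.Ioi x, (y - x) ^ (β - 1) * (y ^ (-α - β) * H y)) :=
  beta_product_convolution_weyl_general P α β hα hβ R S hR hS hind hSlaw H Hab hH hHab ϖ
end

section
/- Let S be uniformly distributed on (0,1), independent of a positive random variable R with distribution function H satisfying H(0)=0 and upper endpoint ω. Let H_{1,1} be the distribution function of W = RS and h_{1,1} its density. Then H(x) = H_{1,1}(x) − x·h_{1,1}(x) for all x ∈ (0, ω). -/
/-!
Write `μ` for the law of `R`. Since `W = R·S > 0` almost surely,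
`H₁₁(x) = ∫₀ˣ h₁₁(t) dt = ∫₀ˣ ∫_{(t,∞)} y⁻¹ dμ(y) dt`. By Tonelli the inner `t`-integral
at a fixed `y` equals `y⁻¹ · min(x, y)`, i.e. `1` for `y ≤ x` and `x / y` for `y > x`;
integrating in `y` gives `H(x) + x · h₁₁(x)`.
-/

open MeasureTheory ProbabilityTheory Set
open scoped ENNReal

lemma ofReal_inv_mul_volume_Iio_inter_Ioc {x : ℝ} (hx : 0 ≤ x) (y : ℝ) :
    ENNReal.ofReal y⁻¹ * volume (Iio y ∩ Ioc 0 x) =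
      (Ioc 0 x).indicator 1 y +
        (Ioi x).indicator (fun y ↦ ENNReal.ofReal x * ENNReal.ofReal y⁻¹) y := by
  rcases le_or_gt y 0 with hy0 | hy0
  · have hempty : Iio y ∩ Ioc 0 x = ∅ :=
      eq_empty_of_forall_notMem fun t ht ↦ (ht.1.trans_le hy0).not_gt ht.2.1
    simp [hempty, hy0.not_gt, (hy0.trans hx).not_gt]
  rcases le_or_gt y x with hyx | hxy
  · have hinter : Iio y ∩ Ioc 0 x = Ioo 0 y := by
      ext t
      simp only [mem_inter_iff, mem_Iio, mem_Ioc, mem_Ioo]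
      exact ⟨fun h ↦ ⟨h.2.1, h.1⟩, fun h ↦ ⟨h.2, h.1, h.2.le.trans hyx⟩⟩
    rw [hinter, Real.volume_Ioo, sub_zero, ← ENNReal.ofReal_mul (inv_nonneg.mpr hy0.le),
      inv_mul_cancel₀ hy0.ne', ENNReal.ofReal_one]
    simp [hy0, hyx, hyx.not_gt]
  · have hinter : Iio y ∩ Ioc 0 x = Ioc 0 x :=
      inter_eq_right.mpr fun t ht ↦ ht.2.trans_lt hxy
    rw [hinter, Real.volume_Ioc, sub_zero, mul_comm]
    simp [hxy, hxy.not_ge]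

lemma lintegral_Ioc_setLIntegral_Ioi_inv (μ : Measure ℝ) [SFinite μ] {x : ℝ} (hx : 0 ≤ x) :
    ∫⁻ t in Ioc 0 x, ∫⁻ y in Ioi t, ENNReal.ofReal y⁻¹ ∂μ =
      μ (Ioc 0 x) + ENNReal.ofReal x * ∫⁻ y in Ioi x, ENNReal.ofReal y⁻¹ ∂μ := by
  have hinv : Measurable fun y : ℝ ↦ ENNReal.ofReal y⁻¹ := by fun_prop
  have hmeas : Measurable (Function.uncurry fun t y : ℝ ↦ (Ioi t).indicator
      (fun y ↦ ENNReal.ofReal y⁻¹) y) :=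
    (hinv.comp measurable_snd).indicator (measurableSet_lt measurable_fst measurable_snd)
  have hinner : ∀ y : ℝ, ∫⁻ t in Ioc 0 x, (Ioi t).indicator (fun y ↦ ENNReal.ofReal y⁻¹) y =
      ENNReal.ofReal y⁻¹ * volume (Iio y ∩ Ioc 0 x) := by
    intro y
    have hflip : (fun t ↦ (Ioi t).indicator (fun y ↦ ENNReal.ofReal y⁻¹) y) =
        (Iio y).indicator fun _ ↦ ENNReal.ofReal y⁻¹ := by
      ext t
      simp only [indicator, mem_Ioi, mem_Iio]
    rw [hflip, lintegral_indicator_const measurableSet_Iio,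
      Measure.restrict_apply measurableSet_Iio]
  conv_lhs => enter [2, t]; rw [← lintegral_indicator measurableSet_Ioi]
  rw [lintegral_lintegral_swap hmeas.aemeasurable]
  simp_rw [hinner, ofReal_inv_mul_volume_Iio_inter_Ioc hx]
  rw [lintegral_add_left (measurable_one.indicator measurableSet_Ioc),
    lintegral_indicator measurableSet_Ioc, lintegral_indicator measurableSet_Ioi,
    lintegral_const_mul _ hinv, Pi.one_def, setLIntegral_const, one_mul]

lemma ofReal_setIntegral_Ioi_inv (μ : Measure ℝ) [IsFiniteMeasure μ] {t : ℝ} (ht : 0 < t) :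
    ENNReal.ofReal (∫ y in Ioi t, y⁻¹ ∂μ) = ∫⁻ y in Ioi t, ENNReal.ofReal y⁻¹ ∂μ := by
  have hbound : ∀ᵐ y ∂μ.restrict (Ioi t), ‖y⁻¹‖ ≤ t⁻¹ := by
    refine ae_restrict_of_forall_mem measurableSet_Ioi fun y hy ↦ ?_
    rw [norm_inv, Real.norm_of_nonneg (ht.trans hy).le]
    exact inv_anti₀ ht hy.le
  refine ofReal_integral_eq_lintegral_ofReal
    ((integrable_const t⁻¹).mono' measurable_inv.aestronglyMeasurable hbound) ?_
  exact ae_restrict_of_forall_mem measurableSet_Ioi fun y hy ↦ inv_nonneg.mpr (ht.trans hy).le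

lemma map_Iic_zero_eq_zero {Ω : Type*} [MeasurableSpace Ω] {P : Measure Ω} {f : Ω → ℝ}
    (hf : AEMeasurable f P) (hpos : ∀ᵐ ω ∂P, 0 < f ω) : P.map f (Iic 0) = 0 := by
  rw [Measure.map_apply_of_aemeasurable hf measurableSet_Iic, ← ae_iff.mp hpos]
  congr 1
  ext ω
  simp [not_lt]

lemma measure_Ioc_zero_eq_measure_Iic {μ : Measure ℝ} (h : μ (Iic 0) = 0) (x : ℝ) :
    μ (Ioc 0 x) = μ (Iic x) := by
  rw [← Iic_sdiff_Iic, measure_sdiff_null h]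

theorem uniform_product_df_identity_general
    {Ω : Type*} [MeasurableSpace Ω] (P : Measure Ω) [IsProbabilityMeasure P]
    (R S : Ω → ℝ) (hR : Measurable R) (hS : Measurable S)
    (hRpos : ∀ᵐ ω ∂P, 0 < R ω)
    -- `S` is uniformly distributed on `(0,1)`
    (hSlaw : Measure.map S P = volume.restrict (Set.Ioo (0 : ℝ) 1))
    -- `H` is the df of `R`, `H11` the df of `W = R·S` and `h11` its density
    (H H11 h11 : ℝ → ℝ)
    (hH : ∀ x, H x = (P {ω | R ω ≤ x}).toReal)
    (hH11 : ∀ x, H11 x = (P {ω | R ω * S ω ≤ x}).toReal)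
    -- `ϖ` is the upper endpoint of `H`
    (ϖ : ℝ≥0∞)
    (hh11dens : Measure.map (fun ω => R ω * S ω) P =
      volume.withDensity (fun x => ENNReal.ofReal (h11 x)))
    (hh11 : ∀ x : ℝ, 0 < x → ENNReal.ofReal x < ϖ →
      h11 x = ∫ y in Set.Ioi x, y⁻¹ ∂(Measure.map R P)) :
    ∀ x : ℝ, 0 < x → ENNReal.ofReal x < ϖ →
      H x = H11 x - x * h11 x := by
  intro x hx hxϖ
  set μ := P.map R
  have hRS : Measurable fun ω ↦ R ω * S ω := hR.mul hS
  have hSpos : ∀ᵐ ω ∂P, 0 < S ω :=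
    ae_of_ae_map hS.aemeasurable (hSlaw ▸ ae_restrict_of_forall_mem measurableSet_Ioo fun _ h ↦ h.1)
  have hRSpos : ∀ᵐ ω ∂P, 0 < R ω * S ω := by
    filter_upwards [hRpos, hSpos] with ω hRω hSω using mul_pos hRω hSω
  have hdens : ∀ t ∈ Ioc 0 x, ENNReal.ofReal (h11 t) = ∫⁻ y in Ioi t, ENNReal.ofReal y⁻¹ ∂μ := by
    intro t ht
    rw [hh11 t ht.1 ((ENNReal.ofReal_le_ofReal ht.2).trans_lt hxϖ),
      ofReal_setIntegral_Ioi_inv μ ht.1]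
  have hdf : P {ω | R ω * S ω ≤ x} = μ (Iic x) + ENNReal.ofReal x * ENNReal.ofReal (h11 x) := by
    change P ((fun ω ↦ R ω * S ω) ⁻¹' Iic x) = _
    rw [← Measure.map_apply hRS measurableSet_Iic,
      ← measure_Ioc_zero_eq_measure_Iic (map_Iic_zero_eq_zero hRS.aemeasurable hRSpos),
      hh11dens, withDensity_apply _ measurableSet_Ioc,
      setLIntegral_congr_fun measurableSet_Ioc fun t ↦ hdens t,
      lintegral_Ioc_setLIntegral_Ioi_inv μ hx.le, ← hdens x ⟨hx, le_rfl⟩,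
      measure_Ioc_zero_eq_measure_Iic (map_Iic_zero_eq_zero hR.aemeasurable hRpos)]
  have hh11_nonneg : 0 ≤ h11 x := by
    rw [hh11 x hx hxϖ]
    exact setIntegral_nonneg measurableSet_Ioi fun y hy ↦ inv_nonneg.mpr (hx.trans hy).le
  rw [hH11, hdf, ENNReal.toReal_add (measure_ne_top μ _) (by finiteness), ENNReal.toReal_mul,
    ENNReal.toReal_ofReal hx.le, ENNReal.toReal_ofReal hh11_nonneg, add_sub_cancel_right, hH,
    Measure.map_apply hR measurableSet_Iic]
  rfl

theorem uniform_product_df_identity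
    {Ω : Type*} [MeasurableSpace Ω] (P : Measure Ω) [IsProbabilityMeasure P]
    (R S : Ω → ℝ) (hR : Measurable R) (hS : Measurable S)
    (hRpos : ∀ᵐ ω ∂P, 0 < R ω)
    (hind : IndepFun R S P)
    -- `S` is uniformly distributed on `(0,1)`
    (hSlaw : Measure.map S P = volume.restrict (Set.Ioo (0 : ℝ) 1))
    -- `H` is the df of `R`, `H11` the df of `W = R·S` and `h11` its density
    (H H11 h11 : ℝ → ℝ)
    (hH : ∀ x, H x = (P {ω | R ω ≤ x}).toReal)
    (hH11 : ∀ x, H11 x = (P {ω | R ω * S ω ≤ x}).toReal)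
    -- `ϖ` is the upper endpoint of `H`
    (ϖ : ℝ≥0∞) (hϖ : ∀ x : ℝ, ENNReal.ofReal x < ϖ ↔ H x < 1)
    (hh11dens : Measure.map (fun ω => R ω * S ω) P =
      volume.withDensity (fun x => ENNReal.ofReal (h11 x)))
    (hh11 : ∀ x : ℝ, 0 < x → ENNReal.ofReal x < ϖ →
      h11 x = ∫ y in Set.Ioi x, y⁻¹ ∂(Measure.map R P)) :
    ∀ x : ℝ, 0 < x → ENNReal.ofReal x < ϖ →
      H x = H11 x - x * h11 x :=
  uniform_product_df_identity_general P R S hR hS hRpos hSlaw H H11 h11 hH hH11 ϖ hh11dens hh11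
end

section
/- Let R, S be independent positive random variables with distribution functions H and G respectively, both vanishing at 0. If H is regularly varying at 0 with index γ > 0 and G is regularly varying at 0 with index α > 0, then the distribution function of W = RS is regularly varying at 0 with index min(γ, α). -/
/-!
Let `H`, `G`, `K` be the distribution functions of `R`, `S`, `RS`, and assume `γ ≤ α` by
symmetry. Fix a small `a` and put `m = x / a`. The event `{RS ≤ x}` splits into
`{S > m}`, `{R > a}` and the box `{R ≤ a, S ≤ m}`. On `{S > m}` the probability is an average of
`H (x / S)` with `x / S < a`, so it scales like `t ^ γ` under `x ↦ t x`; on `{R > a}` it is an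
average of `G (x / R)` with `x / R < m`, which scales like `t ^ α`. The box has mass `H a * G m`,
and this is `o(K (a m))`: `K (a m)` dominates the `N` disjoint dyadic boxes
`(2⁻ʲ⁻¹ a, 2⁻ʲ a] × (-∞, 2ʲ m]`, each of mass about `(1 - 2 ^ (-γ)) H a G m` because `γ ≤ α`.
If `γ = α` both scalings agree; if `γ < α` the piece `{R > a}` has mass at most `G m`, and
`G = o(K)` since `K x ≥ H b * G (x / b) ≈ H b * b ^ (-α) * G x` with `H b * b ^ (-α)` unbounded.
-/

open MeasureTheory ProbabilityTheory Real Filter Topology Set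
open scoped ENNReal

/-- A function `F` is regularly varying at `0` with index `γ`. -/
def RegVarAt0 (F : ℝ → ℝ) (γ : ℝ) : Prop :=
  ∀ t : ℝ, 0 < t →
    Filter.Tendsto (fun x => F (t * x) / F x) (nhdsWithin 0 (Set.Ioi 0)) (nhds (t ^ γ))

theorem abs_div_sub_eq_of_pos {a b c : ℝ} (hb : 0 < b) : |a / b - c| = |a - c * b| / b := by
  rw [← abs_of_pos hb, ← abs_div, abs_of_pos hb, sub_div, mul_div_cancel_right₀ _ hb.ne']

theorem tendsto_div_of_eventually_abs_sub_le {ι : Type*} {l : Filter ι} {f g : ι → ℝ}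
    {c : ℝ} (hg : ∀ᶠ x in l, 0 < g x) (h : ∀ ε > 0, ∀ᶠ x in l, |f x - c * g x| ≤ ε * g x) :
    Tendsto (fun x => f x / g x) l (𝓝 c) := by
  refine Metric.tendsto_nhds.2 fun ε hε => ?_
  filter_upwards [hg, h (ε / 2) (half_pos hε)] with x hgx hx
  rw [Real.dist_eq, abs_div_sub_eq_of_pos hgx, div_lt_iff₀ hgx]
  linarith [mul_lt_mul_of_pos_right (half_lt_self hε) hgx]

theorem abs_setIntegral_sub_le {α : Type*} [MeasurableSpace α] {ν : Measure α} {E : Set α}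
    (hE : MeasurableSet E) {f g : α → ℝ} (hf : IntegrableOn f E ν) (hg : IntegrableOn g E ν)
    {c ε : ℝ} (h : ∀ s ∈ E, |f s - c * g s| ≤ ε * g s) :
    |∫ s in E, f s ∂ν - c * ∫ s in E, g s ∂ν| ≤ ε * ∫ s in E, g s ∂ν := by
  rw [← integral_const_mul, ← integral_sub hf (hg.const_mul c), ← integral_const_mul]
  exact abs_integral_le_integral_abs.trans
    (setIntegral_mono_on (hf.sub (hg.const_mul c)).abs (hg.const_mul ε) hE h)

namespace RegVarAt0

variable {F : ℝ → ℝ} {γ : ℝ}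

theorem of_le_one
    (h : ∀ t ∈ Ioc (0 : ℝ) 1, Tendsto (fun x => F (t * x) / F x) (𝓝[>] 0) (𝓝 (t ^ γ))) :
    RegVarAt0 F γ := by
  intro t ht
  rcases le_or_gt t 1 with ht1 | ht1
  · exact h t ⟨ht, ht1⟩
  have hinv := (h t⁻¹ ⟨inv_pos.2 ht, inv_le_one_of_one_le₀ ht1.le⟩).comp
    (tendsto_comap.mono_left (comap_mulLeft_nhdsGT_zero ht).ge)
  have := hinv.inv₀ (Real.rpow_pos_of_pos (inv_pos.2 ht) γ).ne'
  simpa [Function.comp_def, inv_mul_cancel_left₀ ht.ne', Real.inv_rpow ht.le] using this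

theorem pos (hF : RegVarAt0 F γ) (hmono : Monotone F) (hnonneg : ∀ x, 0 ≤ F x) {x : ℝ}
    (hx : 0 < x) : 0 < F x := by
  have hne : ∀ᶠ y in 𝓝[>] 0, F y ≠ 0 :=
    ((hF 1 one_pos).eventually_ne (b₂ := 0) (by simp)).mono fun y hy h0 => hy (by simp [h0])
  obtain ⟨y, hy, hyx⟩ := (hne.and (Ioo_mem_nhdsGT hx)).exists
  exact ((hnonneg y).lt_of_ne' hy).trans_le (hmono hyx.2.le)

theorem cdf_pos {μ : Measure ℝ} (hμ : RegVarAt0 (cdf μ) γ) {x : ℝ} (hx : 0 < x) :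
    0 < cdf μ x :=
  hμ.pos (monotone_cdf μ) (cdf_nonneg μ) hx

theorem eventually_abs_sub_le (hF : RegVarAt0 F γ) (hpos : ∀ x, 0 < x → 0 < F x) {t ε : ℝ}
    (ht : 0 < t) (hε : 0 < ε) :
    ∀ᶠ x in 𝓝[>] 0, |F (t * x) - t ^ γ * F x| ≤ ε * F x := by
  filter_upwards [hF t ht (Metric.closedBall_mem_nhds _ hε), self_mem_nhdsWithin] with x hx hx0
  have hFx := hpos x hx0
  rwa [mem_preimage, Metric.mem_closedBall, Real.dist_eq, abs_div_sub_eq_of_pos hFx,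
    div_le_iff₀ hFx] at hx

theorem of_eventually_abs_sub_le (hpos : ∀ x, 0 < x → 0 < F x)
    (h : ∀ t ∈ Ioc (0 : ℝ) 1, ∀ ε > 0,
      ∀ᶠ x in 𝓝[>] 0, |F (t * x) - t ^ γ * F x| ≤ ε * F x) :
    RegVarAt0 F γ :=
  of_le_one fun t ht => tendsto_div_of_eventually_abs_sub_le
    (eventually_nhdsWithin_of_forall fun x hx => hpos x hx) (h t ht)

theorem isBigO_comp_mul (hF : RegVarAt0 F γ) (hpos : ∀ x, 0 < x → 0 < F x) {t : ℝ}
    (ht : 0 < t) : (fun x => F (t * x)) =O[𝓝[>] 0] F :=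
  Asymptotics.isBigO_of_div_tendsto_nhds (eventually_nhdsWithin_of_forall fun x hx h0 =>
    absurd h0 (hpos x hx).ne') _ (hF t ht)

theorem exists_mul_rpow_le (hF : RegVarAt0 F γ) (hpos : ∀ x, 0 < x → 0 < F x) {α : ℝ}
    (hγα : γ < α) (N : ℝ) : ∃ b > 0, N * b ^ α ≤ F b := by
  set p : ℝ := 2⁻¹ ^ α
  set q : ℝ := 2⁻¹ ^ γ with hq
  have hp : 0 < p := by positivity
  have hpq : p < q := Real.rpow_lt_rpow_of_exponent_gt (by norm_num) (by norm_num) hγα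
  set r := (p + q) / 2 with hr
  have hr0 : 0 ≤ r := by positivity
  obtain ⟨δ, hδ, hstep⟩ := (nhdsGT_basis (0 : ℝ)).eventually_iff.1
    (hF.eventually_abs_sub_le hpos (t := 2⁻¹) (by norm_num) (half_pos (sub_pos.2 hpq)))
  set b₀ := δ / 2
  have hb₀ : 0 < b₀ := half_pos hδ
  -- halving `n` times multiplies `F` by at least `r ^ n`, while `b ^ α` shrinks by `p ^ n < r ^ n`
  have hiter : ∀ n : ℕ, r ^ n * F b₀ ≤ F (2⁻¹ ^ n * b₀) := by
    intro n
    induction n with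
    | zero => simp
    | succ n ih =>
      have hmem : 2⁻¹ ^ n * b₀ ∈ Ioo 0 δ := ⟨by positivity,
        (mul_le_of_le_one_left hb₀.le (pow_le_one₀ (by norm_num) (by norm_num))).trans_lt
          (half_lt_self hδ)⟩
      have h := abs_le.1 (hstep hmem)
      rw [← hq] at h
      rw [pow_succ', mul_assoc, pow_succ', mul_assoc]
      calc r * (r ^ n * F b₀) ≤ r * F (2⁻¹ ^ n * b₀) := mul_le_mul_of_nonneg_left ih hr0
        _ ≤ F (2⁻¹ * (2⁻¹ ^ n * b₀)) := by rw [hr]; linarith [h.1]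
  have hrp : 1 < r / p := (one_lt_div hp).2 (by rw [hr]; linarith)
  obtain ⟨n, hn⟩ := ((tendsto_pow_atTop_atTop_of_one_lt hrp).eventually_ge_atTop
    (N * b₀ ^ α / F b₀)).exists
  refine ⟨2⁻¹ ^ n * b₀, by positivity, ?_⟩
  rw [div_le_iff₀ (hpos b₀ hb₀)] at hn
  calc N * (2⁻¹ ^ n * b₀) ^ α = N * b₀ ^ α * p ^ n := by
        rw [Real.mul_rpow (by positivity) hb₀.le, ← Real.rpow_pow_comm (by norm_num)]; ring
    _ ≤ (r / p) ^ n * F b₀ * p ^ n := by gcongr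
    _ = r ^ n * F b₀ := by rw [div_pow]; field_simp
    _ ≤ F (2⁻¹ ^ n * b₀) := hiter n

theorem eventually_mul_le_sub (hF : RegVarAt0 F γ) (hpos : ∀ x, 0 < x → 0 < F x)
    (hγ : 0 < γ) (N : ℕ) : ∀ᶠ a in 𝓝[>] 0, ∀ j ∈ Finset.range N,
      (2⁻¹ ^ γ) ^ j * (1 - 2⁻¹ ^ γ) / 2 * F a ≤ F (2⁻¹ ^ j * a) - F (2⁻¹ ^ (j + 1) * a) := by
  set q : ℝ := 2⁻¹ ^ γ
  have hq0 : 0 < q := by positivity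
  have hq1 : q < 1 := Real.rpow_lt_one (by norm_num) (by norm_num) hγ
  set ε := (1 - q) * q ^ N / 4 with hε_def
  have hε : 0 < ε := by have := pow_pos hq0 N; rw [hε_def]; nlinarith
  have hall : ∀ᶠ a in 𝓝[>] 0, ∀ j ∈ Finset.range (N + 1),
      |F (2⁻¹ ^ j * a) - q ^ j * F a| ≤ ε * F a :=
    (Finset.eventually_all _).2 fun j _ => by
      simpa only [q, Real.rpow_pow_comm (by norm_num : (0 : ℝ) ≤ 2⁻¹)]
        using hF.eventually_abs_sub_le hpos (t := 2⁻¹ ^ j) (by positivity) hε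
  filter_upwards [hall, self_mem_nhdsWithin] with a hj (ha : 0 < a) j hjN
  have hjN := Finset.mem_range.1 hjN
  have h1 := abs_le.1 (hj j (Finset.mem_range.2 (by omega)))
  have h2 := abs_le.1 (hj (j + 1) (Finset.mem_range.2 (by omega)))
  have hqN : q ^ N ≤ q ^ j := pow_le_pow_of_le_one hq0.le hq1.le hjN.le
  rw [pow_succ q] at h2
  nlinarith [mul_nonneg (mul_nonneg (sub_nonneg.2 hqN) (sub_nonneg.2 hq1.le)) (hpos a ha).le]

end RegVarAt0

theorem integrable_cdf_comp (μ : Measure ℝ) {ν : Measure ℝ} [IsFiniteMeasure ν]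
    {u : ℝ → ℝ} (hu : Measurable u) : Integrable (fun s => cdf μ (u s)) ν :=
  .of_bound ((monotone_cdf μ).measurable.comp hu).aestronglyMeasurable 1 <|
    ae_of_all _ fun _ => by
      rw [Real.norm_of_nonneg (cdf_nonneg μ _)]
      exact cdf_le_one μ _

theorem measureReal_Ioc_eq_cdf_sub_cdf (μ : Measure ℝ) [IsProbabilityMeasure μ] {u v : ℝ}
    (huv : u ≤ v) : μ.real (Ioc u v) = cdf μ v - cdf μ u := by
  have h := measureReal_union (μ := μ) (s₁ := Iic u) (s₂ := Ioc u v)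
    (disjoint_left.2 fun r hr hr' => hr'.1.not_ge hr) measurableSet_Ioc
  rw [Iic_union_Ioc_eq_Iic huv] at h
  rw [cdf_eq_real, cdf_eq_real, h, add_sub_cancel_left]

theorem cdf_map_eq_toReal {Ω : Type*} [MeasurableSpace Ω] (P : Measure Ω)
    [IsProbabilityMeasure P] {X : Ω → ℝ} (hX : Measurable X) (x : ℝ) :
    cdf (P.map X) x = (P {ω | X ω ≤ x}).toReal := by
  have := Measure.isProbabilityMeasure_map (μ := P) hX.aemeasurable
  rw [cdf_eq_real, map_measureReal_apply hX measurableSet_Iic]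
  rfl

theorem abs_setIntegral_cdf_div_sub_le (μ : Measure ℝ) {ν : Measure ℝ} [IsFiniteMeasure ν]
    {m x t c ε : ℝ} (hm : 0 < m) (hx : 0 < x)
    (h : ∀ z ∈ Ioo 0 (x / m), |cdf μ (t * z) - c * cdf μ z| ≤ ε * cdf μ z) :
    |∫ s in Ioi m, cdf μ (t * (x / s)) ∂ν - c * ∫ s in Ioi m, cdf μ (x / s) ∂ν|
      ≤ ε * ∫ s in Ioi m, cdf μ (x / s) ∂ν :=
  abs_setIntegral_sub_le measurableSet_Ioi (integrable_cdf_comp μ (by fun_prop)).integrableOn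
    (integrable_cdf_comp μ (by fun_prop)).integrableOn fun s (hs : m < s) =>
      h _ ⟨div_pos hx (hm.trans hs), div_lt_div_of_pos_left hx hm hs⟩

theorem setIntegral_cdf_div_le (μ : Measure ℝ) {ν : Measure ℝ} [IsProbabilityMeasure ν]
    {m x : ℝ} (hm : 0 < m) (hx : 0 < x) :
    ∫ s in Ioi m, cdf μ (x / s) ∂ν ≤ cdf μ (x / m) :=
  calc ∫ s in Ioi m, cdf μ (x / s) ∂ν ≤ ∫ _ in Ioi m, cdf μ (x / m) ∂ν :=
        setIntegral_mono_on (integrable_cdf_comp μ (by fun_prop)).integrableOn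
          (integrable_const _) measurableSet_Ioi fun s (hs : m < s) =>
            monotone_cdf μ (div_lt_div_of_pos_left hx hm hs).le
    _ ≤ cdf μ (x / m) := by
        rw [setIntegral_const, smul_eq_mul]
        exact mul_le_of_le_one_left (cdf_nonneg μ _) measureReal_le_one

section Convolution

variable {μ ν : Measure ℝ} [IsProbabilityMeasure μ] [IsProbabilityMeasure ν]

theorem cdf_mconv_eq_measureReal_prod (y : ℝ) :
    cdf (μ ∗ₘ ν) y = (μ.prod ν).real {p | p.1 * p.2 ≤ y} := by
  rw [cdf_eq_real, Measure.mconv, map_measureReal_apply measurable_mul measurableSet_Iic]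
  rfl

theorem measureReal_prod_mul_le_inter_lt_snd {m : ℝ} (hm : 0 ≤ m) (y : ℝ) :
    (μ.prod ν).real ({p | p.1 * p.2 ≤ y} ∩ {p | m < p.2})
      = ∫ s in Ioi m, cdf μ (y / s) ∂ν := by
  have hT : MeasurableSet ({p : ℝ × ℝ | p.1 * p.2 ≤ y} ∩ {p | m < p.2}) :=
    (measurableSet_le (by fun_prop) measurable_const).inter
      (measurableSet_lt measurable_const measurable_snd)
  have hmeas : Measurable fun s => cdf μ (y / s) :=
    (monotone_cdf μ).measurable.comp (by fun_prop)
  rw [integral_eq_lintegral_of_nonneg_ae (ae_of_all _ fun s => cdf_nonneg μ _)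
      hmeas.aestronglyMeasurable, measureReal_def, Measure.prod_apply_symm hT,
    ← lintegral_indicator measurableSet_Ioi]
  congr 1
  refine lintegral_congr fun s => ?_
  by_cases hs : s ∈ Ioi m
  · rw [indicator_of_mem hs, ofReal_cdf]
    congr 1
    ext r
    simp [mem_Ioi.1 hs, le_div_iff₀ (hm.trans_lt hs)]
  · rw [indicator_of_notMem hs]
    simp [mem_Ioi.not.1 hs]

theorem measureReal_prod_mul_le_inter_lt_fst {a : ℝ} (ha : 0 ≤ a) (y : ℝ) :
    (μ.prod ν).real ({p | p.1 * p.2 ≤ y} ∩ {p | a < p.1})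
      = ∫ r in Ioi a, cdf ν (y / r) ∂μ := by
  rw [← Measure.prod_swap, map_measureReal_apply measurable_swap
    ((measurableSet_le (by fun_prop) measurable_const).inter
      (measurableSet_lt measurable_const measurable_fst)),
    ← measureReal_prod_mul_le_inter_lt_snd ha]
  congr 1
  ext p
  simp [mul_comm]

theorem cdf_mconv_eq_add {a m y : ℝ} (ha : 0 ≤ a) (hm : 0 ≤ m) (hy : y ≤ a * m) :
    cdf (μ ∗ₘ ν) y = ∫ s in Ioi m, cdf μ (y / s) ∂ν + ∫ r in Ioi a, cdf ν (y / r) ∂μ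
      + (μ.prod ν).real ({p | p.1 * p.2 ≤ y} ∩ Iic a ×ˢ Iic m) := by
  rw [cdf_mconv_eq_measureReal_prod, ← measureReal_prod_mul_le_inter_lt_snd hm,
    ← measureReal_prod_mul_le_inter_lt_fst ha, ← measureReal_union, ← measureReal_union]
  · congr 1
    ext p
    simp only [mem_union, mem_inter_iff, mem_ofPred_eq, mem_prod, mem_Iic]
    have := le_or_gt p.1 a
    have := le_or_gt p.2 m
    tauto
  · refine disjoint_left.2 fun p hp ⟨_, ha', hm'⟩ => ?_
    rcases hp with ⟨_, hm''⟩ | ⟨_, ha''⟩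
    · exact (mem_Iic.1 hm').not_gt hm''
    · exact (mem_Iic.1 ha').not_gt ha''
  · exact (measurableSet_le (by fun_prop) measurable_const).inter
      (measurableSet_Iic.prod measurableSet_Iic)
  · exact disjoint_left.2 fun p ⟨hp, hm'⟩ ⟨_, ha'⟩ =>
      (hp.trans hy).not_gt (mul_lt_mul'' ha' hm' ha hm)
  · exact (measurableSet_le (by fun_prop) measurable_const).inter
      (measurableSet_lt measurable_const measurable_fst)

theorem abs_cdf_mconv_sub_le {a m t c c' ε : ℝ} (ha : 0 < a) (hm : 0 < m) (ht : t ≤ 1)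
    (hc : c ∈ Icc (0 : ℝ) 1) (hε : 0 ≤ ε)
    (hμ : ∀ z ∈ Ioo 0 a, |cdf μ (t * z) - c * cdf μ z| ≤ ε * cdf μ z)
    (hν : ∀ z ∈ Ioo 0 m, |cdf ν (t * z) - c' * cdf ν z| ≤ ε * cdf ν z) :
    |cdf (μ ∗ₘ ν) (t * (a * m)) - c * cdf (μ ∗ₘ ν) (a * m)|
      ≤ ε * cdf (μ ∗ₘ ν) (a * m) + |c' - c| * cdf ν m + cdf μ a * cdf ν m := by
  have hx : 0 < a * m := mul_pos ha hm
  rw [cdf_mconv_eq_add ha.le hm.le (mul_le_of_le_one_left hx.le ht),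
    cdf_mconv_eq_add ha.le hm.le le_rfl]
  simp_rw [mul_div_assoc t]
  have hφ := abs_setIntegral_cdf_div_sub_le μ (ν := ν) hm hx
    (by rwa [mul_div_cancel_right₀ _ hm.ne'])
  have hψ := abs_setIntegral_cdf_div_sub_le ν (ν := μ) ha hx
    (by rwa [mul_div_cancel_left₀ _ ha.ne'])
  have hψ_le := setIntegral_cdf_div_le ν (ν := μ) ha hx
  rw [mul_div_cancel_left₀ _ ha.ne'] at hψ_le
  set ψ := ∫ r in Ioi a, cdf ν (a * m / r) ∂μ
  have hψ0 : 0 ≤ ψ := setIntegral_nonneg measurableSet_Ioi fun _ _ => cdf_nonneg ν _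
  have hcψ : |(c' - c) * ψ| ≤ |c' - c| * cdf ν m := by
    rw [abs_mul, abs_of_nonneg hψ0]
    exact mul_le_mul_of_nonneg_left hψ_le (abs_nonneg _)
  have hθ : ∀ y, 0 ≤ (μ.prod ν).real ({p | p.1 * p.2 ≤ y} ∩ Iic a ×ˢ Iic m) ∧
      (μ.prod ν).real ({p | p.1 * p.2 ≤ y} ∩ Iic a ×ˢ Iic m) ≤ cdf μ a * cdf ν m := fun y =>
    ⟨measureReal_nonneg, by
      rw [cdf_eq_real, cdf_eq_real, ← measureReal_prod_prod]
      exact measureReal_mono inter_subset_right⟩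
  obtain ⟨hθt0, hθt⟩ := hθ (t * (a * m))
  obtain ⟨hθx0, hθx⟩ := hθ (a * m)
  have := mul_le_of_le_one_left hθx0 hc.2
  have := mul_nonneg hc.1 hθx0
  have := mul_nonneg hε hθx0
  rw [abs_le] at hφ hψ hcψ ⊢
  constructor <;> linarith

theorem cdf_mul_cdf_le_cdf_mconv (hν0 : ∀ᵐ s ∂ν, 0 ≤ s) {a m : ℝ} (ha : 0 ≤ a) :
    cdf μ a * cdf ν m ≤ cdf (μ ∗ₘ ν) (a * m) := by
  rw [cdf_eq_real, cdf_eq_real, ← measureReal_prod_prod, cdf_mconv_eq_measureReal_prod]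
  refine ENNReal.toReal_mono (measure_ne_top _ _) (measure_mono_ae ?_)
  filter_upwards [Measure.quasiMeasurePreserving_snd.ae hν0] with p hp2 hp
  exact mul_le_mul hp.1 hp.2 hp2 ha

theorem sum_cdf_sub_mul_cdf_le_cdf_mconv {b c : ℕ → ℝ} (hb : Antitone b) (hb0 : ∀ j, 0 ≤ b j)
    (hc0 : ∀ j, 0 ≤ c j) {x : ℝ} (hbc : ∀ j, b j * c j ≤ x) (N : ℕ) :
    ∑ j ∈ Finset.range N, (cdf μ (b j) - cdf μ (b (j + 1))) * cdf ν (c j)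
      ≤ cdf (μ ∗ₘ ν) x := by
  have hdisj : ∀ i j, i < j → Disjoint (Ioc (b (i + 1)) (b i)) (Ioc (b (j + 1)) (b j)) :=
    fun i j hij => disjoint_left.2 fun r hri hrj => (hrj.2.trans (hb hij)).not_gt hri.1
  calc ∑ j ∈ Finset.range N, (cdf μ (b j) - cdf μ (b (j + 1))) * cdf ν (c j)
      = ∑ j ∈ Finset.range N, (μ.prod ν).real (Ioc (b (j + 1)) (b j) ×ˢ Iic (c j)) := by
        refine Finset.sum_congr rfl fun j _ => ?_
        rw [measureReal_prod_prod, measureReal_Ioc_eq_cdf_sub_cdf μ (hb j.le_succ), cdf_eq_real ν]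
    _ = (μ.prod ν).real (⋃ j ∈ Finset.range N, Ioc (b (j + 1)) (b j) ×ˢ Iic (c j)) := by
        refine (measureReal_biUnion_finset (fun i _ j _ hij => ?_)
          fun j _ => measurableSet_Ioc.prod measurableSet_Iic).symm
        rcases hij.lt_or_gt with h | h
        · exact disjoint_prod.2 (Or.inl (hdisj i j h))
        · exact disjoint_prod.2 (Or.inl (hdisj j i h).symm)
    _ ≤ cdf (μ ∗ₘ ν) x := by
        rw [cdf_mconv_eq_measureReal_prod]
        refine measureReal_mono (iUnion₂_subset fun j _ p ⟨⟨hp1, hp1'⟩, hp2⟩ => ?_)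
        calc p.1 * p.2 ≤ p.1 * c j := mul_le_mul_of_nonneg_left hp2 ((hb0 (j + 1)).trans hp1.le)
          _ ≤ b j * c j := mul_le_mul_of_nonneg_right hp1' (hc0 j)
          _ ≤ x := hbc j

theorem nat_mul_cdf_mul_cdf_le_cdf_mconv {γ a m : ℝ} (ha : 0 < a) (hm : 0 < m) {N : ℕ}
    (hμa : ∀ j ∈ Finset.range N, (2⁻¹ ^ γ) ^ j * (1 - 2⁻¹ ^ γ) / 2 * cdf μ a
      ≤ cdf μ (2⁻¹ ^ j * a) - cdf μ (2⁻¹ ^ (j + 1) * a))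
    (hνm : ∀ j ∈ Finset.range N, ((2 : ℝ) ^ j) ^ γ / 2 * cdf ν m ≤ cdf ν (2 ^ j * m)) :
    N * ((1 - 2⁻¹ ^ γ) / 4 * (cdf μ a * cdf ν m)) ≤ cdf (μ ∗ₘ ν) (a * m) := by
  have hbox : ∀ j ∈ Finset.range N, (1 - 2⁻¹ ^ γ) / 4 * (cdf μ a * cdf ν m)
      ≤ (cdf μ (2⁻¹ ^ j * a) - cdf μ (2⁻¹ ^ (j + 1) * a)) * cdf ν (2 ^ j * m) := by
    intro j hj
    have hqj : (2⁻¹ ^ γ) ^ j * ((2 : ℝ) ^ j) ^ γ = 1 := by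
      rw [Real.rpow_pow_comm (by norm_num), ← Real.mul_rpow (by positivity) (by positivity),
        ← mul_pow]
      norm_num
    have hD : 0 ≤ cdf μ (2⁻¹ ^ j * a) - cdf μ (2⁻¹ ^ (j + 1) * a) := sub_nonneg.2 <|
      monotone_cdf μ <| mul_le_mul_of_nonneg_right (pow_le_pow_of_le_one (by norm_num)
        (by norm_num) j.le_succ) ha.le
    calc (1 - 2⁻¹ ^ γ) / 4 * (cdf μ a * cdf ν m)
        = (2⁻¹ ^ γ) ^ j * (1 - 2⁻¹ ^ γ) / 2 * cdf μ a * (((2 : ℝ) ^ j) ^ γ / 2 * cdf ν m) := by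
          linear_combination (1 - 2⁻¹ ^ γ) / 4 * cdf μ a * cdf ν m * hqj.symm
      _ ≤ _ := mul_le_mul (hμa j hj) (hνm j hj) (mul_nonneg (by positivity) (cdf_nonneg ν m)) hD
  have hsum := sum_cdf_sub_mul_cdf_le_cdf_mconv (μ := μ) (ν := ν) (b := fun j => 2⁻¹ ^ j * a)
    (c := fun j => 2 ^ j * m) (fun i j hij => mul_le_mul_of_nonneg_right
      (pow_le_pow_of_le_one (by norm_num) (by norm_num) hij) ha.le) (fun j => by positivity)
    (fun j => by positivity) (x := a * m)
    (fun j => by rw [mul_mul_mul_comm, ← mul_pow]; norm_num) N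
  simpa using (Finset.sum_le_sum hbox).trans hsum

theorem cdf_mul_cdf_isLittleO_cdf_mconv {γ α : ℝ} (hγ : 0 < γ) (hγα : γ ≤ α)
    (hμ : RegVarAt0 (cdf μ) γ) (hν : RegVarAt0 (cdf ν) α) :
    (fun p : ℝ × ℝ => cdf μ p.1 * cdf ν p.2) =o[𝓝[>] 0 ×ˢ 𝓝[>] 0]
      fun p => cdf (μ ∗ₘ ν) (p.1 * p.2) := by
  refine Asymptotics.isLittleO_iff.2 fun κ hκ => ?_
  have hq : 0 < 1 - (2 : ℝ)⁻¹ ^ γ := sub_pos.2 (Real.rpow_lt_one (by norm_num) (by norm_num) hγ)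
  obtain ⟨N, hN⟩ := exists_nat_ge (4 / (κ * (1 - 2⁻¹ ^ γ)))
  have hνN : ∀ᶠ m in 𝓝[>] 0, ∀ j ∈ Finset.range N,
      ((2 : ℝ) ^ j) ^ γ / 2 * cdf ν m ≤ cdf ν (2 ^ j * m) :=
    (Finset.eventually_all _).2 fun j _ => (hν.eventually_abs_sub_le (fun _ => hν.cdf_pos)
      (t := 2 ^ j) (by positivity) (by positivity : 0 < ((2 : ℝ) ^ j) ^ α / 2)).mono
        fun m hm => by
          have := mul_le_mul_of_nonneg_right (Real.rpow_le_rpow_of_exponent_le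
            (one_le_pow₀ (n := j) (by norm_num : (1 : ℝ) ≤ 2)) hγα) (cdf_nonneg ν m)
          linarith [(abs_le.1 hm).1]
  filter_upwards [((hμ.eventually_mul_le_sub (fun _ => hμ.cdf_pos) hγ N).and
    self_mem_nhdsWithin).prod_mk (hνN.and self_mem_nhdsWithin)]
    with ⟨a, m⟩ ⟨⟨hμa, ha⟩, hνm, hm⟩
  have hK := nat_mul_cdf_mul_cdf_le_cdf_mconv ha hm hμa hνm
  rw [div_le_iff₀ (by positivity)] at hN
  rw [Real.norm_of_nonneg (mul_nonneg (cdf_nonneg μ a) (cdf_nonneg ν m)),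
    Real.norm_of_nonneg (cdf_nonneg _ _)]
  nlinarith [mul_nonneg (cdf_nonneg μ a) (cdf_nonneg ν m)]

theorem cdf_isLittleO_cdf_mconv (hν0 : ∀ᵐ s ∂ν, 0 ≤ s) {γ α : ℝ}
    (hγα : γ < α) (hμ : RegVarAt0 (cdf μ) γ) (hν : RegVarAt0 (cdf ν) α) :
    (cdf ν : ℝ → ℝ) =o[𝓝[>] 0] cdf (μ ∗ₘ ν) := by
  refine Asymptotics.isLittleO_iff.2 fun κ hκ => ?_
  obtain ⟨b, hb, hbμ⟩ := hμ.exists_mul_rpow_le (fun _ => hμ.cdf_pos) hγα (2 / κ)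
  filter_upwards [hν.eventually_abs_sub_le (fun _ => hν.cdf_pos) (inv_pos.2 hb)
    (by positivity : 0 < b⁻¹ ^ α / 2)] with x hx
  rw [Real.norm_of_nonneg (cdf_nonneg _ _), Real.norm_of_nonneg (cdf_nonneg _ _)]
  have hK := cdf_mul_cdf_le_cdf_mconv (μ := μ) hν0 (m := b⁻¹ * x) hb.le
  rw [mul_inv_cancel_left₀ hb.ne'] at hK
  have hbα : b ^ α * b⁻¹ ^ α = 1 := by
    rw [Real.inv_rpow hb.le, mul_inv_cancel₀ (Real.rpow_pos_of_pos hb α).ne']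
  have hG : b⁻¹ ^ α / 2 * cdf ν x ≤ cdf ν (b⁻¹ * x) := by linarith [(abs_le.1 hx).1]
  have hG0 : 0 ≤ b⁻¹ ^ α / 2 * cdf ν x := mul_nonneg (by positivity) (cdf_nonneg ν x)
  calc cdf ν x = κ * (2 / κ) / 2 * (b ^ α * b⁻¹ ^ α) * cdf ν x := by rw [hbα]; field_simp
    _ = κ * (2 / κ * b ^ α * (b⁻¹ ^ α / 2 * cdf ν x)) := by ring
    _ ≤ κ * (cdf μ b * cdf ν (b⁻¹ * x)) :=
        mul_le_mul_of_nonneg_left (mul_le_mul hbμ hG hG0 (cdf_nonneg μ b)) hκ.le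
    _ ≤ κ * cdf (μ ∗ₘ ν) x := mul_le_mul_of_nonneg_left hK hκ.le

theorem eventually_abs_rpow_sub_rpow_mul_cdf_le (hν0 : ∀ᵐ s ∂ν, 0 ≤ s) {γ α : ℝ}
    (hγ : 0 < γ) (hγα : γ ≤ α) (hμ : RegVarAt0 (cdf μ) γ) (hν : RegVarAt0 (cdf ν) α)
    {t c ε : ℝ} (ht : t ∈ Ioc (0 : ℝ) 1) (hc : 0 < c) (hε : 0 < ε) :
    ∀ᶠ x in 𝓝[>] 0, |t ^ α - t ^ γ| * cdf ν (c * x) ≤ ε * cdf (μ ∗ₘ ν) x := by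
  rcases hγα.eq_or_lt with rfl | hlt
  · exact Eventually.of_forall fun x => by simpa using mul_nonneg hε.le (cdf_nonneg _ x)
  have htα : |t ^ α - t ^ γ| ≤ 1 := abs_sub_le_of_nonneg_of_le (Real.rpow_nonneg ht.1.le _)
    (Real.rpow_le_one ht.1.le ht.2 (hγ.trans hlt).le) (Real.rpow_nonneg ht.1.le _)
    (Real.rpow_le_one ht.1.le ht.2 hγ.le)
  filter_upwards [((hν.isBigO_comp_mul (fun _ => hν.cdf_pos) hc).trans_isLittleO
    (cdf_isLittleO_cdf_mconv hν0 hlt hμ hν)).bound hε] with x hx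
  rw [Real.norm_of_nonneg (cdf_nonneg _ _), Real.norm_of_nonneg (cdf_nonneg _ _)] at hx
  exact (mul_le_of_le_one_left (cdf_nonneg _ _) htα).trans hx

theorem regVarAt0_cdf_mconv_of_le (hν0 : ∀ᵐ s ∂ν, 0 ≤ s) {γ α : ℝ}
    (hγ : 0 < γ) (hγα : γ ≤ α) (hμ : RegVarAt0 (cdf μ) γ) (hν : RegVarAt0 (cdf ν) α) :
    RegVarAt0 (cdf (μ ∗ₘ ν)) γ := by
  have hKpos : ∀ x, 0 < x → 0 < cdf (μ ∗ₘ ν) x := fun x hx =>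
    (mul_pos (hμ.cdf_pos hx) (hν.cdf_pos one_pos)).trans_le
      (by simpa using cdf_mul_cdf_le_cdf_mconv (μ := μ) hν0 (m := 1) hx.le)
  refine RegVarAt0.of_eventually_abs_sub_le hKpos fun t ht ε hε => ?_
  have hε3 : 0 < ε / 3 := by positivity
  obtain ⟨δ, hδ, hμδ⟩ := (nhdsGT_basis (0 : ℝ)).eventually_iff.1
    (hμ.eventually_abs_sub_le (fun _ => hμ.cdf_pos) ht.1 hε3)
  obtain ⟨δ', hδ', hνδ⟩ := (nhdsGT_basis (0 : ℝ)).eventually_iff.1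
    (hν.eventually_abs_sub_le (fun _ => hν.cdf_pos) ht.1 hε3)
  -- cut at `R = η`, `S = x / η` for one fixed `η` below `δ` at which the box bound holds
  obtain ⟨η, hηbox, hη⟩ := (((cdf_mul_cdf_isLittleO_cdf_mconv hγ hγα hμ hν).bound hε3).curry.and
    (Ioo_mem_nhdsGT hδ)).exists
  filter_upwards [eventually_nhdsGT_zero_mul_left (inv_pos.2 hη.1)
      (hηbox.and (Ioo_mem_nhdsGT hδ')),
    eventually_abs_rpow_sub_rpow_mul_cdf_le hν0 hγ hγα hμ hν ht (inv_pos.2 hη.1) hε3]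
    with x ⟨hxη, hxδ⟩ hψ
  have key := abs_cdf_mconv_sub_le hη.1 hxδ.1 ht.2
    ⟨Real.rpow_nonneg ht.1.le _, Real.rpow_le_one ht.1.le ht.2 hγ.le⟩ hε3.le
    (fun z hz => hμδ ⟨hz.1, hz.2.trans hη.2⟩) (fun z hz => hνδ ⟨hz.1, hz.2.trans hxδ.2⟩)
  rw [Real.norm_of_nonneg (mul_nonneg (cdf_nonneg _ _) (cdf_nonneg _ _)),
    Real.norm_of_nonneg (cdf_nonneg _ _)] at hxη
  rw [mul_inv_cancel_left₀ hη.1.ne'] at key hxη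
  linarith [mul_nonneg hε3.le (cdf_nonneg (μ ∗ₘ ν) x)]

theorem regVarAt0_cdf_mconv (hμ0 : ∀ᵐ r ∂μ, 0 ≤ r) (hν0 : ∀ᵐ s ∂ν, 0 ≤ s) {γ α : ℝ}
    (hγ : 0 < γ) (hα : 0 < α) (hμ : RegVarAt0 (cdf μ) γ) (hν : RegVarAt0 (cdf ν) α) :
    RegVarAt0 (cdf (μ ∗ₘ ν)) (min γ α) := by
  rcases le_total γ α with h | h
  · rw [min_eq_left h]
    exact regVarAt0_cdf_mconv_of_le hν0 hγ h hμ hν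
  · rw [min_eq_right h, Measure.mconv_comm]
    exact regVarAt0_cdf_mconv_of_le hμ0 hα h hν hμ

end Convolution

theorem product_regular_variation_at_zero
    {Ω : Type*} [MeasurableSpace Ω] (P : Measure Ω) [IsProbabilityMeasure P]
    (γ α : ℝ) (hγ : 0 < γ) (hα : 0 < α)
    (R S : Ω → ℝ) (hR : Measurable R) (hS : Measurable S)
    (hRpos : ∀ᵐ ω ∂P, 0 < R ω) (hSpos : ∀ᵐ ω ∂P, 0 < S ω)
    (hind : IndepFun R S P)
    (hRrv : RegVarAt0 (fun x => (P {ω | R ω ≤ x}).toReal) γ)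
    (hSrv : RegVarAt0 (fun x => (P {ω | S ω ≤ x}).toReal) α) :
    RegVarAt0 (fun x => (P {ω | R ω * S ω ≤ x}).toReal) (min γ α) := by
  have := Measure.isProbabilityMeasure_map (μ := P) hR.aemeasurable
  have := Measure.isProbabilityMeasure_map (μ := P) hS.aemeasurable
  have hlaw : ∀ {X : Ω → ℝ}, Measurable X → (∀ᵐ ω ∂P, 0 < X ω) → ∀ᵐ x ∂(P.map X), 0 ≤ x :=
    fun hX h => (ae_map_iff hX.aemeasurable measurableSet_Ici).2 (h.mono fun _ h => h.le)
  have hRS (x : ℝ) : (P {ω | R ω * S ω ≤ x}).toReal = cdf (P.map R ∗ₘ P.map S) x := by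
    rw [← hind.map_mul_eq_map_mconv_map hR hS, cdf_map_eq_toReal P (hR.mul hS)]
    rfl
  simp_rw [hRS, ← cdf_map_eq_toReal P hR, ← cdf_map_eq_toReal P hS] at hRrv hSrv ⊢
  exact regVarAt0_cdf_mconv (hlaw hR hRpos) (hlaw hS hSpos) hγ hα hRrv hSrv
end

section
/- Let R ~ H with H(0)=0 be regularly varying at 0 with index γ ∈ (0, α+β'). Then for λ = α+β'+1 and δ ∈ (0,1], the Weyl integral satisfies Γ(δ)(I_δ p_{-λ} H)(x) ~ x^{δ-λ} H(x) · B(δ, λ−δ−γ) as x ↓ 0, where B is the Beta function; explicitly ∫_x^∞ (y−x)^{δ−1} y^{−λ} H(y) dy ~ x^{δ−λ} H(x) ∫_1^∞ (y−1)^{δ−1} y^{−λ+γ} dy = x^{δ−λ} H(x) Γ(δ)Γ(λ−δ−γ)/Γ(λ−γ). -/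
open MeasureTheory ProbabilityTheory Real Filter Topology Set
open scoped ENNReal

/-!
Substituting `y = x u` turns the integral into
`x ^ (δ - λ) H(x) ∫_1^∞ (u - 1) ^ (δ - 1) u ^ (-λ) H(x u) / H(x) du`.
Regular variation gives `H(x u) / H(x) → u ^ γ` for each `u`. For dominated convergence we need a
Potter bound `H(x u) ≤ C u ^ ρ H(x)`, uniform in small `x` and `u ≥ 1`, with `γ < ρ < λ - δ`:
iterating `H(2 y) ≤ 2 ^ ρ H(y)` (valid for small `y`) handles `x u` small, and `H ≤ 1` handles
`x u` large. The limit `∫_1^∞ (u - 1) ^ (δ - 1) u ^ (γ - λ) du` becomes the Beta integral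
`B(λ - γ - δ, δ)` under `u = 1 / t`.
-/

section Beta

variable {a b : ℝ}

lemma ofReal_rpow_mul_one_sub_rpow {t : ℝ} (ht : t ∈ Icc (0 : ℝ) 1) :
    ((t ^ (a - 1) * (1 - t) ^ (b - 1) : ℝ) : ℂ)
      = (t : ℂ) ^ ((a : ℂ) - 1) * (1 - (t : ℂ)) ^ ((b : ℂ) - 1) := by
  rw [Complex.ofReal_mul, Complex.ofReal_cpow ht.1, Complex.ofReal_cpow (sub_nonneg.2 ht.2)]
  push_cast
  rfl

lemma integrableOn_rpow_mul_one_sub_rpow (ha : 0 < a) (hb : 0 < b) :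
    IntegrableOn (fun t : ℝ => t ^ (a - 1) * (1 - t) ^ (b - 1)) (Ioo 0 1) := by
  have h := Complex.betaIntegral_convergent (u := a) (v := b) (by simpa) (by simpa)
  rw [intervalIntegrable_iff_integrableOn_Ioc_of_le zero_le_one] at h
  have hre : IntegrableOn
      (fun t : ℝ => RCLike.re ((t : ℂ) ^ ((a : ℂ) - 1) * (1 - (t : ℂ)) ^ ((b : ℂ) - 1)))
      (Ioc 0 1) :=
    h.re
  refine (hre.congr_fun (fun t ht => ?_) measurableSet_Ioc).mono_set Ioo_subset_Ioc_self
  rw [← ofReal_rpow_mul_one_sub_rpow (Ioc_subset_Icc_self ht), RCLike.re_to_complex,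
    Complex.ofReal_re]

lemma integral_rpow_mul_one_sub_rpow (ha : 0 < a) (hb : 0 < b) :
    ∫ t in Ioo (0 : ℝ) 1, t ^ (a - 1) * (1 - t) ^ (b - 1) = beta a b := by
  have h : Complex.betaIntegral a b
      = ((∫ t in (0 : ℝ)..1, t ^ (a - 1) * (1 - t) ^ (b - 1) : ℝ) : ℂ) := by
    rw [Complex.betaIntegral, ← intervalIntegral.integral_ofReal]
    refine intervalIntegral.integral_congr fun t ht => ?_
    rw [uIcc_of_le zero_le_one] at ht
    exact (ofReal_rpow_mul_one_sub_rpow ht).symm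
  rw [beta_eq_betaIntegralReal a b ha hb, h, Complex.ofReal_re,
    intervalIntegral.integral_of_le zero_le_one, integral_Ioc_eq_integral_Ioo]

lemma abs_deriv_inv_smul_rpow_mul_one_sub_rpow {s u : ℝ} (hu : 1 < u) :
    |-(u ^ 2)⁻¹| • ((u⁻¹) ^ (s - b - 1) * (1 - u⁻¹) ^ (b - 1)) = (u - 1) ^ (b - 1) * u ^ (-s) := by
  have hu0 : 0 < u := one_pos.trans hu
  have h1 : 1 - u⁻¹ = (u - 1) * u⁻¹ := by field_simp
  calc |-(u ^ 2)⁻¹| • ((u⁻¹) ^ (s - b - 1) * (1 - u⁻¹) ^ (b - 1))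
      = (u - 1) ^ (b - 1) * (u ^ (-2 : ℝ) * u ^ (-(s - b - 1)) * u ^ (-(b - 1))) := by
        rw [smul_eq_mul, abs_neg, abs_of_pos (by positivity), h1,
          mul_rpow (sub_pos.2 hu).le (inv_nonneg.2 hu0.le), inv_rpow hu0.le, inv_rpow hu0.le,
          ← rpow_neg hu0.le, ← rpow_neg hu0.le, rpow_neg hu0.le 2, rpow_two]
        ring
    _ = (u - 1) ^ (b - 1) * u ^ (-s) := by
        rw [← rpow_add hu0, ← rpow_add hu0]
        ring_nf

lemma image_inv_Ioi_one : (fun u : ℝ => u⁻¹) '' Ioi 1 = Ioo 0 1 := by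
  ext t
  constructor
  · rintro ⟨u, hu, rfl⟩
    exact ⟨inv_pos.2 (one_pos.trans hu), inv_lt_one_of_one_lt₀ hu⟩
  · rintro ⟨h0, h1⟩
    exact ⟨t⁻¹, (one_lt_inv_iff₀).2 ⟨h0, h1⟩, inv_inv t⟩

variable {s : ℝ}

lemma integrableOn_Ioi_sub_one_rpow_mul_rpow_neg (hb : 0 < b) (hbs : b < s) :
    IntegrableOn (fun u : ℝ => (u - 1) ^ (b - 1) * u ^ (-s)) (Ioi 1) := by
  have h := integrableOn_rpow_mul_one_sub_rpow (sub_pos.2 hbs) hb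
  rw [← image_inv_Ioi_one, integrableOn_image_iff_integrableOn_abs_deriv_smul measurableSet_Ioi
    (fun u hu => (hasDerivAt_inv (one_pos.trans hu).ne').hasDerivWithinAt) inv_injective.injOn]
    at h
  exact h.congr_fun (fun u hu => abs_deriv_inv_smul_rpow_mul_one_sub_rpow hu) measurableSet_Ioi

lemma integral_Ioi_sub_one_rpow_mul_rpow_neg (hb : 0 < b) (hbs : b < s) :
    ∫ u in Ioi (1 : ℝ), (u - 1) ^ (b - 1) * u ^ (-s) = beta (s - b) b := by
  rw [← integral_rpow_mul_one_sub_rpow (sub_pos.2 hbs) hb, ← image_inv_Ioi_one,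
    integral_image_eq_integral_abs_deriv_smul measurableSet_Ioi
    (fun u hu => (hasDerivAt_inv (one_pos.trans hu).ne').hasDerivWithinAt) inv_injective.injOn]
  exact setIntegral_congr_fun measurableSet_Ioi
    (fun u hu => (abs_deriv_inv_smul_rpow_mul_one_sub_rpow hu).symm)

end Beta

section Doubling

variable {F : ℝ → ℝ} {x₁ : ℝ}

lemma le_pow_mul_of_doubling {K : ℝ} (hK : 0 ≤ K)
    (hstep : ∀ x ∈ Ioc 0 x₁, F (2 * x) ≤ K * F x) :
    ∀ n : ℕ, ∀ x, 0 < x → 2 ^ n * x ≤ 2 * x₁ → F (2 ^ n * x) ≤ K ^ n * F x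
  | 0, x, _, _ => by simp
  | n + 1, x, hx, hle => by
    have hn : 2 ^ n * x ≤ x₁ := by rw [pow_succ] at hle; linarith
    calc F (2 ^ (n + 1) * x) = F (2 * (2 ^ n * x)) := by ring_nf
      _ ≤ K * F (2 ^ n * x) := hstep _ ⟨by positivity, hn⟩
      _ ≤ K * (K ^ n * F x) := by
          have hpos : 0 < 2 ^ n * x := by positivity
          gcongr
          exact le_pow_mul_of_doubling hK hstep n x hx (by linarith)
      _ = K ^ (n + 1) * F x := by ring

lemma le_rpow_mul_of_doubling (hmono : Monotone F) (hpos : ∀ x, 0 < x → 0 < F x) {ρ : ℝ}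
    (hρ : 0 ≤ ρ) (hstep : ∀ x ∈ Ioc 0 x₁, F (2 * x) ≤ 2 ^ ρ * F x) {x y : ℝ} (hx : 0 < x)
    (hxy : x ≤ y) (hy : y ≤ x₁) : F y ≤ 2 ^ ρ * (y / x) ^ ρ * F x := by
  obtain ⟨n, hn, hn'⟩ := exists_nat_pow_near ((one_le_div hx).2 hxy) one_lt_two
  have hup : y ≤ 2 ^ (n + 1) * x := ((div_lt_iff₀ hx).1 hn').le
  have hlow : (2 : ℝ) ^ (n + 1) ≤ 2 * (y / x) := by rw [pow_succ, mul_comm]; gcongr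
  have hiter := le_pow_mul_of_doubling (by positivity) hstep (n + 1) x hx
    (by have := (le_div_iff₀ hx).1 hn; rw [pow_succ]; nlinarith)
  calc F y ≤ F (2 ^ (n + 1) * x) := hmono hup
    _ ≤ (2 ^ ρ) ^ (n + 1) * F x := hiter
    _ = ((2 : ℝ) ^ (n + 1)) ^ ρ * F x := by rw [rpow_pow_comm zero_le_two]
    _ ≤ (2 * (y / x)) ^ ρ * F x := by gcongr; exact (hpos x hx).le
    _ = 2 ^ ρ * (y / x) ^ ρ * F x := by
        rw [mul_rpow zero_le_two (div_nonneg (hx.le.trans hxy) hx.le)]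

end Doubling

namespace RegVarAt0

variable {F : ℝ → ℝ} {γ ρ M : ℝ}

-- If `F` vanished on some `(0, x]`, the ratios `F (2 * y) / F y` would be `0 / 0 = 0` near `0`.
lemma pos_of_monotone (hF : RegVarAt0 F γ) (hmono : Monotone F) (hnn : ∀ x, 0 ≤ F x) {x : ℝ}
    (hx : 0 < x) : 0 < F x := by
  by_contra! hle
  have hzero : ∀ y ≤ x, F y = 0 := fun y hy => le_antisymm ((hmono hy).trans hle) (hnn y)
  have hev : (fun y => F (2 * y) / F y) =ᶠ[𝓝[>] 0] fun _ => 0 := by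
    filter_upwards [Ioo_mem_nhdsGT (half_pos hx)] with y hy
    rw [hzero (2 * y) (by linarith [hy.2]), zero_div]
  have h := tendsto_nhds_unique ((hF 2 two_pos).congr' hev) tendsto_const_nhds
  exact (rpow_pos_of_pos two_pos γ).ne' h

lemma exists_doubling_le (hF : RegVarAt0 F γ) (hpos : ∀ x, 0 < x → 0 < F x)
    (hγρ : γ < ρ) : ∃ x₁, 0 < x₁ ∧ ∀ x ∈ Ioc 0 x₁, F (2 * x) ≤ 2 ^ ρ * F x := by
  have hev := (hF 2 two_pos).eventually_lt_const (rpow_lt_rpow_of_exponent_lt one_lt_two hγρ)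
  obtain ⟨b, hb : 0 < b, hsub⟩ := mem_nhdsGT_iff_exists_Ioo_subset.1 hev
  refine ⟨b / 2, half_pos hb, fun x hx => ?_⟩
  have hlt : F (2 * x) / F x < 2 ^ ρ := hsub ⟨hx.1, by linarith [hx.2, half_lt_self hb]⟩
  exact ((div_lt_iff₀ (hpos x hx.1)).1 hlt).le

lemma exists_potter_bound (hF : RegVarAt0 F γ) (hmono : Monotone F)
    (hpos : ∀ x, 0 < x → 0 < F x) (hbdd : ∀ x, F x ≤ M) (hγ : 0 ≤ γ) (hγρ : γ < ρ) :
    ∃ C x₁, 0 < x₁ ∧ ∀ x ∈ Ioc 0 x₁, ∀ u, 1 ≤ u → F (x * u) ≤ C * u ^ ρ * F x := by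
  obtain ⟨x₁, hx₁, hstep⟩ := hF.exists_doubling_le hpos hγρ
  have hρ : 0 ≤ ρ := hγ.trans hγρ.le
  have hM : 1 ≤ M / F x₁ := (one_le_div (hpos x₁ hx₁)).2 (hbdd x₁)
  refine ⟨2 ^ ρ * (M / F x₁), x₁, hx₁, fun x hx u hu => ?_⟩
  have hbound {y : ℝ} (hxy : x ≤ y) (hy : y ≤ x₁) : F y ≤ 2 ^ ρ * (y / x) ^ ρ * F x :=
    le_rpow_mul_of_doubling hmono hpos hρ hstep hx.1 hxy hy
  have hFx := (hpos x hx.1).le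
  rcases le_or_gt (x * u) x₁ with hsmall | hlarge
  · calc F (x * u) ≤ 2 ^ ρ * (x * u / x) ^ ρ * F x :=
          hbound (le_mul_of_one_le_right hx.1.le hu) hsmall
      _ = 2 ^ ρ * 1 * u ^ ρ * F x := by rw [mul_div_cancel_left₀ _ hx.1.ne']; ring
      _ ≤ 2 ^ ρ * (M / F x₁) * u ^ ρ * F x := by gcongr
  · have hx₁u : x₁ / x ≤ u := (div_le_iff₀ hx.1).2 (by linarith)
    calc F (x * u) ≤ M / F x₁ * F x₁ := by
          rw [div_mul_cancel₀ _ (hpos x₁ hx₁).ne']; exact hbdd _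
      _ ≤ M / F x₁ * (2 ^ ρ * (x₁ / x) ^ ρ * F x) := by
          gcongr
          exact hbound hx.2 le_rfl
      _ ≤ M / F x₁ * (2 ^ ρ * u ^ ρ * F x) := by gcongr; exact div_nonneg hx₁.le hx.1.le
      _ = 2 ^ ρ * (M / F x₁) * u ^ ρ * F x := by ring

lemma tendsto_setIntegral_Ioi_one_mul_div (hF : RegVarAt0 F γ) (hmono : Monotone F)
    (hpos : ∀ x, 0 < x → 0 < F x) (hbdd : ∀ x, F x ≤ M) (hγ : 0 ≤ γ) (hγρ : γ < ρ)
    {g : ℝ → ℝ} (hgm : AEStronglyMeasurable g (volume.restrict (Ioi 1)))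
    (hg : IntegrableOn (fun u => g u * u ^ ρ) (Ioi 1)) :
    Tendsto (fun x => ∫ u in Ioi 1, g u * F (x * u) / F x) (𝓝[>] 0)
      (𝓝 (∫ u in Ioi 1, g u * u ^ γ)) := by
  obtain ⟨C, x₁, hx₁, hpotter⟩ := hF.exists_potter_bound hmono hpos hbdd hγ hγρ
  refine tendsto_integral_filter_of_dominated_convergence (fun u => C * ‖g u * u ^ ρ‖)
    (Eventually.of_forall fun x =>
      (hgm.mul (hmono.measurable.comp (measurable_const_mul x)).aestronglyMeasurable).mul_const
        (F x)⁻¹)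
    ?_ (hg.norm.const_mul C) ?_
  · filter_upwards [Ioc_mem_nhdsGT hx₁] with x hx
    filter_upwards [ae_restrict_mem measurableSet_Ioi] with u (hu : 1 < u)
    have hu0 : 0 < u := one_pos.trans hu
    rw [mul_div_assoc, norm_mul, norm_mul, norm_of_nonneg (rpow_nonneg hu0.le ρ),
      norm_of_nonneg (div_nonneg (hpos _ (mul_pos hx.1 hu0)).le (hpos x hx.1).le)]
    calc ‖g u‖ * (F (x * u) / F x) ≤ ‖g u‖ * (C * u ^ ρ) := by
          gcongr
          exact (div_le_iff₀ (hpos x hx.1)).2 (hpotter x hx u hu.le)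
      _ = C * (‖g u‖ * u ^ ρ) := by ring
  · filter_upwards [ae_restrict_mem measurableSet_Ioi] with u (hu : 1 < u)
    simp_rw [mul_div_assoc, mul_comm _ u]
    exact (hF u (one_pos.trans hu)).const_mul (g u)

end RegVarAt0

lemma setIntegral_Ioi_sub_rpow_mul_rpow_mul (f : ℝ → ℝ) {x : ℝ} (hx : 0 < x) (p q : ℝ) :
    ∫ y in Ioi x, (y - x) ^ p * y ^ q * f y
      = x ^ (p + q + 1) * ∫ u in Ioi 1, (u - 1) ^ p * u ^ q * f (x * u) := by
  have h := integral_comp_mul_left_Ioi (fun y => (y - x) ^ p * y ^ q * f y) 1 hx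
  have hpt : ∀ u ∈ Ioi (1 : ℝ), (x * u - x) ^ p * (x * u) ^ q * f (x * u)
      = x ^ (p + q) * ((u - 1) ^ p * u ^ q * f (x * u)) := fun u (hu : 1 < u) => by
    rw [show x * u - x = x * (u - 1) by ring, mul_rpow hx.le (by linarith),
      mul_rpow hx.le (by linarith), rpow_add hx]
    ring
  rw [mul_one, smul_eq_mul, setIntegral_congr_fun measurableSet_Ioi hpt, integral_const_mul] at h
  rw [rpow_add_one hx.ne', mul_comm _ x, mul_assoc, h, mul_inv_cancel_left₀ hx.ne']

theorem weyl_integral_asymptotics_general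
    (α β' γ δ : ℝ) (hγ : 0 < γ)
    (hγαβ : γ < α + β') (hδ : δ ∈ Set.Ioc (0 : ℝ) 1)
    -- `H` is a distribution function on `(0,∞)` with `H(0) = 0`
    (H : ℝ → ℝ) (hmono : Monotone H) (hH0 : ∀ x ≤ (0 : ℝ), H x = 0)
    (hH1 : Filter.Tendsto H Filter.atTop (nhds 1))
    (hHrv : RegVarAt0 H γ) :
    Filter.Tendsto
      (fun x => (∫ y in Set.Ioi x, (y - x) ^ (δ - 1) * y ^ (-(α + β' + 1)) * H y) /
        (x ^ (δ - (α + β' + 1)) * H x *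
          (Real.Gamma δ * Real.Gamma ((α + β' + 1) - δ - γ) /
            Real.Gamma ((α + β' + 1) - γ))))
      (nhdsWithin 0 (Set.Ioi 0)) (nhds 1) := by
  obtain ⟨hδ0, hδ1⟩ := hδ
  set l := α + β' + 1
  have hnn : ∀ x, 0 ≤ H x := fun x =>
    (hH0 _ (min_le_right x 0)).symm.le.trans (hmono (min_le_left x 0))
  have hpos : ∀ x, 0 < x → 0 < H x := fun x hx => hHrv.pos_of_monotone hmono hnn hx
  have hweight : ∀ s, ∀ u ∈ Ioi (1 : ℝ),
      (u - 1) ^ (δ - 1) * u ^ (-l) * u ^ s = (u - 1) ^ (δ - 1) * u ^ (-(l - s)) := fun s u hu => by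
    rw [mul_assoc, ← rpow_add (one_pos.trans hu)]
    ring_nf
  have hlim := hHrv.tendsto_setIntegral_Ioi_one_mul_div hmono hpos (hmono.ge_of_tendsto hH1)
    hγ.le (ρ := (γ + (l - δ)) / 2) (by linarith)
    (by fun_prop : Measurable fun u : ℝ => (u - 1) ^ (δ - 1) * u ^ (-l)).aestronglyMeasurable
    ((integrableOn_Ioi_sub_one_rpow_mul_rpow_neg hδ0 (by linarith)).congr_fun
      (fun u hu => (hweight _ u hu).symm) measurableSet_Ioi)
  have hB : 0 < Gamma δ * Gamma (l - δ - γ) / Gamma (l - γ) :=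
    div_pos (mul_pos (Gamma_pos_of_pos hδ0) (Gamma_pos_of_pos (by linarith)))
      (Gamma_pos_of_pos (by linarith))
  rw [setIntegral_congr_fun measurableSet_Ioi (hweight γ),
    integral_Ioi_sub_one_rpow_mul_rpow_neg hδ0 (by linarith), beta, sub_add_cancel,
    sub_right_comm, mul_comm] at hlim
  have hlim' := hlim.div_const (Gamma δ * Gamma (l - δ - γ) / Gamma (l - γ))
  rw [div_self hB.ne'] at hlim'
  refine hlim'.congr' ?_
  filter_upwards [self_mem_nhdsWithin] with x (hx : 0 < x)
  rw [setIntegral_Ioi_sub_rpow_mul_rpow_mul H hx, integral_div, div_div,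
    show δ - 1 + -l + 1 = δ - l by ring, mul_assoc (x ^ (δ - l)),
    mul_div_mul_left _ _ (rpow_pos_of_pos hx _).ne']

theorem weyl_integral_asymptotics
    (α β' γ δ : ℝ) (hα : 0 < α) (hβ' : 0 < β') (hγ : 0 < γ)
    (hγαβ : γ < α + β') (hδ : δ ∈ Set.Ioc (0 : ℝ) 1)
    -- `H` is a distribution function on `(0,∞)` with `H(0) = 0`
    (H : ℝ → ℝ) (hmono : Monotone H) (hH0 : ∀ x ≤ (0 : ℝ), H x = 0)
    (hH1 : Filter.Tendsto H Filter.atTop (nhds 1))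
    (hHrv : RegVarAt0 H γ) :
    Filter.Tendsto
      (fun x => (∫ y in Set.Ioi x, (y - x) ^ (δ - 1) * y ^ (-(α + β' + 1)) * H y) /
        (x ^ (δ - (α + β' + 1)) * H x *
          (Real.Gamma δ * Real.Gamma ((α + β' + 1) - δ - γ) /
            Real.Gamma ((α + β' + 1) - γ))))
      (nhdsWithin 0 (Set.Ioi 0)) (nhds 1) :=
  weyl_integral_asymptotics_general α β' γ δ hγ hγαβ hδ H hmono hH0 hH1 hHrv
end

section
/- Let β > 0 and H be a distribution function on (0,∞) with H(0)=0 and upper endpoint ω. Then for all x ∈ (0,ω): (1/Γ(β+1)) ∫_x^∞ (y−x)^β y^{−β} dH(y) = (x/Γ(β)) ∫_x^∞ (y−x)^{β−1} y^{−1−β} (1−H(y)) dy. -/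
/-!
The function `t ↦ (t - x)^β t^(-β)` vanishes at `t = x` and has derivative
`β x (t - x)^(β-1) t^(-1-β)`, so `(y - x)^β y^(-β)` is the integral of that kernel over `(x, y)`.
Integrating in `y` against `μ` and swapping the integrals (Tonelli) turns the inner `dμ(y)`
integral into the survival function `μ (t, ∞) = 1 - H t`; finally `Γ(β + 1) = β Γ(β)`.
-/

open MeasureTheory ProbabilityTheory Real Filter Topology Set
open scoped ENNReal

lemma sub_rpow_mul_rpow_nonneg {x t : ℝ} (a b : ℝ) (hx : 0 ≤ x) (hxt : x ≤ t) :
    0 ≤ (t - x) ^ a * t ^ b :=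
  mul_nonneg (rpow_nonneg (sub_nonneg.2 hxt) a) (rpow_nonneg (hx.trans hxt) b)

lemma hasDerivAt_sub_rpow_mul_rpow_neg (β : ℝ) {x t : ℝ} (hxt : x < t) (ht : 0 < t) :
    HasDerivAt (fun s : ℝ => (s - x) ^ β * s ^ (-β))
      (β * x * ((t - x) ^ (β - 1) * t ^ (-1 - β))) t := by
  have hxt' : 0 < t - x := sub_pos.2 hxt
  have hd := (((hasDerivAt_id t).sub_const x).rpow_const (p := β) (Or.inl hxt'.ne')).mul
    (Real.hasDerivAt_rpow_const (x := t) (p := -β) (Or.inl ht.ne'))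
  refine hd.congr_deriv ?_
  have e1 : t ^ (-β) = t ^ (-1 - β) * t := by
    rw [← Real.rpow_add_one ht.ne']; ring_nf
  have e2 : (t - x) ^ β = (t - x) ^ (β - 1) * (t - x) := by
    rw [← Real.rpow_add_one hxt'.ne']; ring_nf
  simp only [id, e1, e2, show -β - 1 = -1 - β by ring]
  ring

lemma intervalIntegrable_sub_rpow_mul_rpow {β x y : ℝ} (hβ : 0 < β) (hx : 0 < x) (hxy : x ≤ y) :
    IntervalIntegrable (fun t : ℝ => (t - x) ^ (β - 1) * t ^ (-1 - β)) volume x y := by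
  have hsing : IntervalIntegrable (fun t : ℝ => (t - x) ^ (β - 1)) volume x y := by
    simpa using (intervalIntegral.intervalIntegrable_rpow' (a := 0) (b := y - x)
      (by linarith : (-1 : ℝ) < β - 1)).comp_sub_right x
  refine hsing.mul_continuousOn fun t ht => ?_
  rw [uIcc_of_le hxy] at ht
  exact (Real.continuousAt_rpow_const _ _ (Or.inl (hx.trans_le ht.1).ne')).continuousWithinAt

lemma integral_sub_rpow_mul_rpow {β x y : ℝ} (hβ : 0 < β) (hx : 0 < x) (hxy : x ≤ y) :
    ∫ t in x..y, β * x * ((t - x) ^ (β - 1) * t ^ (-1 - β)) = (y - x) ^ β * y ^ (-β) := by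
  have hcont : ContinuousOn (fun s : ℝ => (s - x) ^ β * s ^ (-β)) (Icc x y) := by
    refine ContinuousOn.mul ?_ ?_
    · exact (continuous_id.sub continuous_const).continuousOn.rpow_const fun _ _ => Or.inr hβ.le
    · exact continuousOn_id.rpow_const fun t ht => Or.inl (hx.trans_le ht.1).ne'
  rw [intervalIntegral.integral_eq_sub_of_hasDerivAt_of_le hxy hcont
    (fun t ht => hasDerivAt_sub_rpow_mul_rpow_neg β ht.1 (hx.trans ht.1))
    ((intervalIntegrable_sub_rpow_mul_rpow hβ hx hxy).const_mul _)]
  simp [Real.zero_rpow hβ.ne']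

lemma lintegral_lintegral_Ioo_eq_lintegral_mul_measure_Ioi (μ : Measure ℝ) [SFinite μ]
    {k : ℝ → ℝ≥0∞} (hk : Measurable k) (x : ℝ) :
    ∫⁻ y in Ioi x, (∫⁻ t in Ioo x y, k t) ∂μ = ∫⁻ t in Ioi x, k t * μ (Ioi t) := by
  set F : ℝ × ℝ → ℝ≥0∞ := {p | p.2 < p.1}.indicator fun p => k p.2
  have hF : Measurable F :=
    (hk.comp measurable_snd).indicator (measurableSet_lt measurable_snd measurable_fst)
  calc ∫⁻ y in Ioi x, (∫⁻ t in Ioo x y, k t) ∂μ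
      = ∫⁻ y in Ioi x, (∫⁻ t in Ioi x, F (y, t)) ∂μ := by
        refine lintegral_congr fun y => ?_
        have : (fun t => F (y, t)) = (Iio y).indicator k := by
          ext t; simp [F, indicator]
        rw [this, lintegral_indicator measurableSet_Iio, Measure.restrict_restrict measurableSet_Iio,
          Iio_inter_Ioi]
    _ = ∫⁻ t in Ioi x, ∫⁻ y in Ioi x, F (y, t) ∂μ :=
        lintegral_lintegral_swap (f := fun y t => F (y, t)) hF.aemeasurable
    _ = ∫⁻ t in Ioi x, k t * μ (Ioi t) := by
        refine setLIntegral_congr_fun measurableSet_Ioi fun t ht => ?_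
        have : (fun y => F (y, t)) = (Ioi t).indicator fun _ => k t := by
          ext y; simp [F, indicator]
        rw [this, lintegral_indicator measurableSet_Ioi, Measure.restrict_restrict measurableSet_Ioi,
          inter_eq_left.2 (Ioi_subset_Ioi (le_of_lt ht)), setLIntegral_const]

lemma lintegral_Ioo_sub_rpow_mul_rpow {β x y : ℝ} (hβ : 0 < β) (hx : 0 < x) (hxy : x ≤ y) :
    ∫⁻ t in Ioo x y, ENNReal.ofReal (β * x * ((t - x) ^ (β - 1) * t ^ (-1 - β)))
      = ENNReal.ofReal ((y - x) ^ β * y ^ (-β)) := by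
  have hint := ((intervalIntegrable_sub_rpow_mul_rpow hβ hx hxy).const_mul (β * x)).1
  rw [← integral_sub_rpow_mul_rpow hβ hx hxy, intervalIntegral.integral_of_le hxy,
    setLIntegral_congr Ioo_ae_eq_Ioc, ofReal_integral_eq_lintegral_ofReal hint]
  refine (ae_restrict_iff' measurableSet_Ioc).2 (ae_of_all _ fun t ht => ?_)
  have := sub_rpow_mul_rpow_nonneg (β - 1) (-1 - β) hx.le ht.1.le
  positivity

lemma lintegral_Ioi_sub_rpow_mul_rpow_neg (μ : Measure ℝ) [SFinite μ] {β x : ℝ} (hβ : 0 < β)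
    (hx : 0 < x) :
    ∫⁻ y in Ioi x, ENNReal.ofReal ((y - x) ^ β * y ^ (-β)) ∂μ
      = ∫⁻ t in Ioi x, ENNReal.ofReal (β * x * ((t - x) ^ (β - 1) * t ^ (-1 - β))) * μ (Ioi t) := by
  rw [← lintegral_lintegral_Ioo_eq_lintegral_mul_measure_Ioi μ (by fun_prop) x]
  exact setLIntegral_congr_fun measurableSet_Ioi fun y hy =>
    (lintegral_Ioo_sub_rpow_mul_rpow hβ hx (le_of_lt hy)).symm

theorem integral_Ioi_sub_rpow_mul_rpow_neg (μ : Measure ℝ) [IsFiniteMeasure μ] {β x : ℝ}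
    (hβ : 0 < β) (hx : 0 < x) :
    ∫ y in Ioi x, (y - x) ^ β * y ^ (-β) ∂μ
      = β * x * ∫ t in Ioi x, (t - x) ^ (β - 1) * t ^ (-1 - β) * μ.real (Ioi t) := by
  have hsurv_meas : Measurable fun t => μ.real (Ioi t) :=
    Antitone.measurable fun _ _ hst => measureReal_mono (Ioi_subset_Ioi hst)
  rw [← integral_const_mul, integral_eq_lintegral_of_nonneg_ae, integral_eq_lintegral_of_nonneg_ae,
    lintegral_Ioi_sub_rpow_mul_rpow_neg μ hβ hx]
  · congr 1
    refine setLIntegral_congr_fun measurableSet_Ioi fun t ht => ?_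
    have := sub_rpow_mul_rpow_nonneg (β - 1) (-1 - β) hx.le (le_of_lt ht)
    rw [← ofReal_measureReal, ← ENNReal.ofReal_mul (by positivity), mul_assoc (β * x)]
  · refine (ae_restrict_iff' measurableSet_Ioi).2 (ae_of_all _ fun t ht => ?_)
    have := sub_rpow_mul_rpow_nonneg (β - 1) (-1 - β) hx.le (le_of_lt ht)
    positivity
  · fun_prop
  · exact (ae_restrict_iff' measurableSet_Ioi).2 (ae_of_all _ fun y hy =>
      sub_rpow_mul_rpow_nonneg β (-β) hx.le (le_of_lt hy))
  · fun_prop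

theorem weyl_stieltjes_survival_identity_general
    (β : ℝ) (hβ : 0 < β)
    -- `μ` is the law of a positive random variable with df `H`
    (μ : Measure ℝ) [IsProbabilityMeasure μ]
    (H : ℝ → ℝ) (hH : ∀ x, H x = (μ (Set.Iic x)).toReal)
    -- `ϖ` is the upper endpoint of `H`
    (ϖ : ℝ≥0∞) :
    ∀ x : ℝ, 0 < x → ENNReal.ofReal x < ϖ →
      (1 / Real.Gamma (β + 1)) * ∫ y in Set.Ioi x, (y - x) ^ β * y ^ (-β) ∂μ
        = (x / Real.Gamma β) *
            ∫ y in Set.Ioi x, (y - x) ^ (β - 1) * y ^ (-1 - β) * (1 - H y) := by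
  intro x hx _
  have hsurv (t : ℝ) : μ.real (Ioi t) = 1 - H t := by
    rw [hH, ← compl_Iic, measureReal_compl measurableSet_Iic, probReal_univ, measureReal_def]
  simp_rw [integral_Ioi_sub_rpow_mul_rpow_neg μ hβ hx, hsurv, Real.Gamma_add_one hβ.ne']
  have hΓ := (Real.Gamma_pos_of_pos hβ).ne'
  field_simp

theorem weyl_stieltjes_survival_identity
    (β : ℝ) (hβ : 0 < β)
    -- `μ` is the law of a positive random variable with df `H`
    (μ : Measure ℝ) [IsProbabilityMeasure μ] (hμ0 : μ (Set.Iic 0) = 0)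
    (H : ℝ → ℝ) (hH : ∀ x, H x = (μ (Set.Iic x)).toReal)
    -- `ϖ` is the upper endpoint of `H`
    (ϖ : ℝ≥0∞) (hϖ : ∀ x : ℝ, ENNReal.ofReal x < ϖ ↔ H x < 1) :
    ∀ x : ℝ, 0 < x → ENNReal.ofReal x < ϖ →
      (1 / Real.Gamma (β + 1)) * ∫ y in Set.Ioi x, (y - x) ^ β * y ^ (-β) ∂μ
        = (x / Real.Gamma β) *
            ∫ y in Set.Ioi x, (y - x) ^ (β - 1) * y ^ (-1 - β) * (1 - H y) :=
  weyl_stieltjes_survival_identity_general β hβ μ H hH ϖ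
end

section
/- Let R ~ H with H(0)=0, independent of S uniform on (0,1), and set H_{1,1} the df of W = RS with density h_{1,1}. If lim_{x↓0} x·h_{1,1}(x)/H_{1,1}(x) = γ ∈ [0,1), then H_{1,1} is regularly varying at 0 with index γ and lim_{x↓0} H(x)/H_{1,1}(x) = 1 − γ; consequently H is also regularly varying at 0 with index γ. -/
open MeasureTheory ProbabilityTheory Real Filter Topology Set
open scoped ENNReal

lemma tendsto_const_mul_nhdsGT_zero {t : ℝ} (ht : 0 < t) :
    Tendsto (t * ·) (𝓝[>] 0) (𝓝[>] 0) :=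
  tendsto_iff_comap.2 (comap_mulLeft_nhdsGT_zero ht).ge

lemma regVarAt0_of_one_le {F : ℝ → ℝ} {γ : ℝ}
    (h : ∀ t, 1 ≤ t → Tendsto (fun x => F (t * x) / F x) (𝓝[>] 0) (𝓝 (t ^ γ))) :
    RegVarAt0 F γ := by
  intro t ht
  rcases le_or_gt 1 t with h1 | h1
  · exact h t h1
  have hinv := ((h t⁻¹ (one_le_inv₀ ht |>.2 h1.le)).comp
    (tendsto_const_mul_nhdsGT_zero ht)).inv₀ (rpow_pos_of_pos (inv_pos.2 ht) γ).ne'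
  simpa [Function.comp_def, inv_mul_cancel_left₀ ht.ne', inv_rpow ht.le] using hinv

lemma RegVarAt0.of_tendsto_div {F G : ℝ → ℝ} {γ c : ℝ} (hG : RegVarAt0 G γ) (hc : c ≠ 0)
    (hFG : Tendsto (fun x => F x / G x) (𝓝[>] 0) (𝓝 c)) : RegVarAt0 F γ := by
  intro t ht
  have hne : ∀ᶠ x in 𝓝[>] 0, F x / G x ≠ 0 := hFG.eventually_ne hc
  have hlim := ((hFG.comp (tendsto_const_mul_nhdsGT_zero ht)).mul (hG t ht)).mul (hFG.inv₀ hc)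
  rw [mul_right_comm, mul_inv_cancel₀ hc, one_mul] at hlim
  refine hlim.congr' ?_
  filter_upwards [hne, tendsto_const_mul_nhdsGT_zero ht hne] with x hx htx
  simp only [Function.comp_apply, div_ne_zero_iff, mem_preimage, mem_ofPred_eq] at hx htx ⊢
  field_simp [htx.2, hx.1, hx.2]

section Growth

variable {F f : ℝ → ℝ} {a b c : ℝ}

lemma image_le_mul_rpow_of_mul_deriv_lt (ha : 0 < a) (hab : a ≤ b)
    (hF : ContinuousOn F (Icc a b)) (hF' : ∀ x ∈ Ico a b, HasDerivWithinAt F (f x) (Ici x) x)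
    (hlt : ∀ x ∈ Ico a b, x * f x < c * F x) :
    F b ≤ F a * (b / a) ^ c := by
  -- compare `F` with the solution `B x = F a * (x / a) ^ c` of `x * B' x = c * B x`
  have hB : ∀ x ∈ Ici a,
      HasDerivAt (fun x => F a * (x / a) ^ c) (c * (F a * (x / a) ^ c) / x) x := by
    intro x hx
    have hx0 : 0 < x := ha.trans_le hx
    refine (((hasDerivAt_id x).div_const a).rpow_const (p := c)
      (Or.inl (div_pos hx0 ha).ne')).const_mul (F a) |>.congr_deriv ?_
    rw [id, rpow_sub_one (div_pos hx0 ha).ne']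
    field_simp
  refine image_le_of_deriv_right_lt_deriv_boundary' hF hF' (by simp [ha.ne'])
    (fun x hx => (hB x hx.1).continuousAt.continuousWithinAt)
    (fun x hx => (hB x hx.1).hasDerivWithinAt) (fun x hx hFx => ?_) ⟨hab, le_rfl⟩
  rw [← hFx, lt_div_iff₀ (ha.trans_le hx.1), mul_comm]
  exact hlt x hx

lemma mul_rpow_le_image_of_lt_mul_deriv (ha : 0 < a) (hab : a ≤ b)
    (hF : ContinuousOn F (Icc a b)) (hF' : ∀ x ∈ Ico a b, HasDerivWithinAt F (f x) (Ici x) x)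
    (hlt : ∀ x ∈ Ico a b, c * F x < x * f x) :
    F a * (b / a) ^ c ≤ F b := by
  simpa using image_le_mul_rpow_of_mul_deriv_lt (F := -F) (f := -f) ha hab hF.neg
    (fun x hx => (hF' x hx).neg) (fun x hx => by simpa using hlt x hx)

lemma eventually_forall_Icc_const_mul {p : ℝ → Prop} (h : ∀ᶠ x in 𝓝[>] (0 : ℝ), p x) (t : ℝ) :
    ∀ᶠ x in 𝓝[>] (0 : ℝ), ∀ s ∈ Icc x (t * x), p s := by
  obtain ⟨δ, hδ, hδp⟩ := mem_nhdsGT_iff_exists_Ioo_subset.1 h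
  have htx : ∀ᶠ x in 𝓝[>] (0 : ℝ), t * x < δ :=
    (((continuous_const_mul t).tendsto' 0 0 (mul_zero t)).mono_left nhdsWithin_le_nhds).eventually
      (gt_mem_nhds hδ)
  filter_upwards [htx, self_mem_nhdsWithin] with x hx hx0 s hs
  exact hδp ⟨hx0.trans_le hs.1, hs.2.trans_lt hx⟩

variable (hpos : ∀ x, 0 < x → 0 < F x) (hcont : ContinuousOn F (Ioi 0))
  (hF' : ∀ x, 0 < x → HasDerivWithinAt F (f x) (Ici x) x)
include hpos hcont hF'

lemma eventually_rpow_le_div_of_lt_mul_deriv_div {t : ℝ} (ht : 1 ≤ t)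
    (h : ∀ᶠ x in 𝓝[>] 0, c < x * f x / F x) : ∀ᶠ x in 𝓝[>] 0, t ^ c ≤ F (t * x) / F x := by
  filter_upwards [eventually_forall_Icc_const_mul h t, self_mem_nhdsWithin] with x hx (hx0 : 0 < x)
  have hle := mul_rpow_le_image_of_lt_mul_deriv hx0 (le_mul_of_one_le_left hx0.le ht)
    (hcont.mono fun s hs => hx0.trans_le hs.1) (fun s hs => hF' s (hx0.trans_le hs.1))
    (fun s hs => (lt_div_iff₀ (hpos s (hx0.trans_le hs.1))).1 (hx s (Ico_subset_Icc_self hs)))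
  rw [le_div_iff₀ (hpos x hx0), mul_comm]
  rwa [mul_div_cancel_right₀ t hx0.ne'] at hle

lemma eventually_div_le_rpow_of_mul_deriv_div_lt {t : ℝ} (ht : 1 ≤ t)
    (h : ∀ᶠ x in 𝓝[>] 0, x * f x / F x < c) : ∀ᶠ x in 𝓝[>] 0, F (t * x) / F x ≤ t ^ c := by
  filter_upwards [eventually_forall_Icc_const_mul h t, self_mem_nhdsWithin] with x hx (hx0 : 0 < x)
  have hle := image_le_mul_rpow_of_mul_deriv_lt hx0 (le_mul_of_one_le_left hx0.le ht)
    (hcont.mono fun s hs => hx0.trans_le hs.1) (fun s hs => hF' s (hx0.trans_le hs.1))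
    (fun s hs => (div_lt_iff₀ (hpos s (hx0.trans_le hs.1))).1 (hx s (Ico_subset_Icc_self hs)))
  rw [div_le_iff₀ (hpos x hx0), mul_comm (t ^ c)]
  rwa [mul_div_cancel_right₀ t hx0.ne'] at hle

theorem regVarAt0_of_tendsto_mul_deriv_div {γ : ℝ}
    (hlim : Tendsto (fun x => x * f x / F x) (𝓝[>] 0) (𝓝 γ)) : RegVarAt0 F γ := by
  refine regVarAt0_of_one_le fun t ht => tendsto_order.2 ⟨fun a ha => ?_, fun a ha => ?_⟩
  · have hexp : ContinuousAt (fun e => t ^ (γ - e)) 0 := by fun_prop (disch := positivity)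
    obtain ⟨ε, hεa, hε : 0 < ε⟩ :=
      ((hexp.tendsto.mono_left (nhdsWithin_le_nhds (s := Ioi 0))).eventually
        (lt_mem_nhds (by simpa using ha))).and self_mem_nhdsWithin |>.exists
    filter_upwards [eventually_rpow_le_div_of_lt_mul_deriv_div hpos hcont hF' ht
      (hlim.eventually (lt_mem_nhds (sub_lt_self γ hε)))] with x hx
    exact hεa.trans_le hx
  · have hexp : ContinuousAt (fun e => t ^ (γ + e)) 0 := by fun_prop (disch := positivity)
    obtain ⟨ε, hεa, hε : 0 < ε⟩ :=
      ((hexp.tendsto.mono_left (nhdsWithin_le_nhds (s := Ioi 0))).eventually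
        (gt_mem_nhds (by simpa using ha))).and self_mem_nhdsWithin |>.exists
    filter_upwards [eventually_div_le_rpow_of_mul_deriv_div_lt hpos hcont hF' ht
      (hlim.eventually (gt_mem_nhds (lt_add_of_pos_right γ hε)))] with x hx
    exact hx.trans_lt hεa

end Growth

lemma min_div_one_mem_Icc {x y : ℝ} (hx : 0 ≤ x) (hy : 0 < y) : min (x / y) 1 ∈ Icc 0 1 :=
  ⟨le_min (div_nonneg hx hy.le) zero_le_one, min_le_right _ _⟩

lemma abs_slope_min_div_one_le {x u y : ℝ} (hx : 0 < x) (hxu : x < u) (hy : 0 < y) :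
    |slope (fun u => min (u / y) 1) x u| ≤ x⁻¹ := by
  rw [slope_def_field, abs_div, abs_of_pos (sub_pos.2 hxu), div_le_iff₀ (sub_pos.2 hxu)]
  rcases le_or_gt y x with hyx | hxy
  · rw [min_eq_right ((one_le_div hy).2 (hyx.trans hxu.le)), min_eq_right ((one_le_div hy).2 hyx)]
    simpa using (mul_pos (inv_pos.2 hx) (sub_pos.2 hxu)).le
  · calc |min (u / y) 1 - min (x / y) 1| ≤ |u / y - x / y| := by
          simpa using abs_min_sub_min_le_max (u / y) 1 (x / y) 1
      _ = y⁻¹ * (u - x) := by rw [← sub_div, abs_div, abs_of_pos (sub_pos.2 hxu), abs_of_pos hy,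
          div_eq_inv_mul]
      _ ≤ x⁻¹ * (u - x) := by gcongr

lemma tendsto_slope_min_div_one {x y : ℝ} (hy : 0 < y) :
    Tendsto (slope (fun u => min (u / y) 1) x) (𝓝[>] x) (𝓝 ((Ioi x).indicator (·⁻¹) y)) := by
  rcases lt_or_ge x y with hxy | hyx
  · rw [indicator_of_mem (mem_Ioi.2 hxy)]
    refine tendsto_const_nhds.congr' ?_
    filter_upwards [Ioo_mem_nhdsGT hxy] with u hu
    rw [slope_def_field, min_eq_left ((div_le_one hy).2 hu.2.le),
      min_eq_left ((div_le_one hy).2 hxy.le), ← sub_div, div_div_cancel_left' (sub_pos.2 hu.1).ne']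
  · rw [indicator_of_notMem (notMem_Ioi.2 hyx)]
    refine tendsto_const_nhds.congr' ?_
    filter_upwards [self_mem_nhdsWithin] with u (hu : x < u)
    rw [slope_def_field, min_eq_right ((one_le_div hy).2 (hyx.trans hu.le)),
      min_eq_right ((one_le_div hy).2 hyx), sub_self, zero_div]

lemma prod_restrict_Ioo_setOf_mul_le {μ : Measure ℝ} [SFinite μ] (hμ : ∀ᵐ y ∂μ, 0 < y) (x : ℝ) :
    μ.prod (volume.restrict (Ioo 0 1)) {p | p.1 * p.2 ≤ x}
      = ∫⁻ y, ENNReal.ofReal (min (x / y) 1) ∂μ := by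
  rw [Measure.prod_apply (measurableSet_le (by fun_prop) measurable_const),
    Measure.restrict_congr_set Ioo_ae_eq_Ioc]
  refine lintegral_congr_ae ?_
  filter_upwards [hμ] with y hy
  have hslice : Prod.mk y ⁻¹' {p : ℝ × ℝ | p.1 * p.2 ≤ x} = Iic (x / y) := by
    ext s
    simp [le_div_iff₀ hy, mul_comm]
  rw [hslice, Measure.restrict_apply measurableSet_Iic, inter_comm, Ioc_inter_Iic, Real.volume_Ioc,
    sub_zero, min_comm]

section MulUniform

/-- `P(R S ≤ x) = E[min (x / R) 1]` for `x ≥ 0`, when `R ~ μ` is a.s. positive and `S` is uniform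
on `(0, 1)` and independent of `R`. -/
noncomputable def cdfMulUniform (μ : Measure ℝ) (x : ℝ) : ℝ := ∫ y, min (x / y) 1 ∂μ

variable {μ : Measure ℝ} [IsFiniteMeasure μ]

variable (hμ : ∀ᵐ y ∂μ, 0 < y)
include hμ

lemma integrable_min_div_one {x : ℝ} (hx : 0 ≤ x) : Integrable (fun y => min (x / y) 1) μ := by
  refine Integrable.mono' (integrable_const 1) (by fun_prop) ?_
  filter_upwards [hμ] with y hy
  have h := min_div_one_mem_Icc hx hy
  rw [Real.norm_of_nonneg h.1]
  exact h.2

lemma cdfMulUniform_eq_add {x : ℝ} (hx : 0 < x) :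
    cdfMulUniform μ x = μ.real (Iic x) + x * ∫ y in Ioi x, y⁻¹ ∂μ := by
  rw [cdfMulUniform, ← integral_add_compl measurableSet_Iic (integrable_min_div_one hμ hx.le),
    compl_Iic, ← integral_const_mul]
  congr 1
  · rw [setIntegral_congr_ae measurableSet_Iic (g := fun _ => 1), setIntegral_const, smul_eq_mul,
      mul_one]
    filter_upwards [hμ] with y hy (hyx : y ≤ x)
    exact min_eq_right ((one_le_div hy).2 hyx)
  · refine setIntegral_congr_fun measurableSet_Ioi fun y (hy : x < y) => ?_
    rw [min_eq_left ((div_le_one (hx.trans hy)).2 hy.le), div_eq_mul_inv]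

lemma cdfMulUniform_pos [NeZero μ] {x : ℝ} (hx : 0 < x) : 0 < cdfMulUniform μ x := by
  refine (integral_pos_iff_support_of_nonneg_ae ?_ (integrable_min_div_one hμ hx.le)).2 ?_
  · filter_upwards [hμ] with y hy using (min_div_one_mem_Icc hx.le hy).1
  · refine pos_iff_ne_zero.2 fun h => ?_
    obtain ⟨y, hy, hxy⟩ := (hμ.and (measure_eq_zero_iff_ae_notMem.1 h)).exists
    exact hxy (lt_min (div_pos hx hy) one_pos).ne'

lemma continuousOn_cdfMulUniform : ContinuousOn (cdfMulUniform μ) (Ioi 0) := by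
  refine continuousOn_of_dominated (bound := fun _ => 1) (fun x _ => by fun_prop)
    (fun x (hx : 0 < x) => ?_) (integrable_const 1)
    (ae_of_all _ fun y => by fun_prop)
  filter_upwards [hμ] with y hy
  have h := min_div_one_mem_Icc hx.le hy
  rw [Real.norm_of_nonneg h.1]
  exact h.2

lemma hasDerivWithinAt_cdfMulUniform {x : ℝ} (hx : 0 < x) :
    HasDerivWithinAt (cdfMulUniform μ) (∫ y in Ioi x, y⁻¹ ∂μ) (Ici x) x := by
  rw [← hasDerivWithinAt_Ioi_iff_Ici, hasDerivWithinAt_iff_tendsto_slope' self_notMem_Ioi,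
    ← integral_indicator measurableSet_Ioi]
  have hslope : ∀ᶠ u in 𝓝[>] x,
      ∫ y, slope (fun u => min (u / y) 1) x u ∂μ = slope (cdfMulUniform μ) x u := by
    filter_upwards [self_mem_nhdsWithin] with u (hu : x < u)
    simp only [slope_def_field, cdfMulUniform]
    rw [integral_div, integral_sub (integrable_min_div_one hμ (hx.trans hu).le)
      (integrable_min_div_one hμ hx.le)]
  refine (tendsto_integral_filter_of_dominated_convergence (fun _ => x⁻¹) ?_ ?_
    (integrable_const _) ?_).congr' hslope
  · exact Eventually.of_forall fun u => by simp only [slope_def_field]; fun_prop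
  · filter_upwards [self_mem_nhdsWithin] with u (hu : x < u)
    filter_upwards [hμ] with y hy
    exact abs_slope_min_div_one_le hx hu hy
  · filter_upwards [hμ] with y hy
    exact tendsto_slope_min_div_one hy

end MulUniform

theorem measure_mul_le_eq_cdfMulUniform {Ω : Type*} [MeasurableSpace Ω] {P : Measure Ω}
    [IsFiniteMeasure P] {R S : Ω → ℝ} (hR : Measurable R) (hS : Measurable S)
    (hRpos : ∀ᵐ ω ∂P, 0 < R ω) (hind : IndepFun R S P)
    (hSlaw : P.map S = volume.restrict (Ioo 0 1)) {x : ℝ} (hx : 0 ≤ x) :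
    (P {ω | R ω * S ω ≤ x}).toReal = cdfMulUniform (P.map R) x := by
  have hμ : ∀ᵐ y ∂P.map R, 0 < y := (ae_map_iff hR.aemeasurable measurableSet_Ioi).2 hRpos
  have hpair : {ω | R ω * S ω ≤ x} = (fun ω => (R ω, S ω)) ⁻¹' {p | p.1 * p.2 ≤ x} := rfl
  rw [hpair, ← Measure.map_apply (hR.prodMk hS) (measurableSet_le (by fun_prop) measurable_const),
    (indepFun_iff_map_prod_eq_prod_map_map hR.aemeasurable hS.aemeasurable).1 hind, hSlaw,
    prod_restrict_Ioo_setOf_mul_le hμ x, cdfMulUniform,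
    integral_eq_lintegral_of_nonneg_ae _ (by fun_prop)]
  filter_upwards [hμ] with y hy using (min_div_one_mem_Icc hx hy).1

theorem uniform_product_converse_regular_variation
    {Ω : Type*} [MeasurableSpace Ω] (P : Measure Ω) [IsProbabilityMeasure P]
    (γ : ℝ) (hγ : γ ∈ Set.Ico (0 : ℝ) 1)
    (R S : Ω → ℝ) (hR : Measurable R) (hS : Measurable S)
    (hRpos : ∀ᵐ ω ∂P, 0 < R ω)
    (hind : IndepFun R S P)
    -- `S` is uniformly distributed on `(0,1)`
    (hSlaw : Measure.map S P = volume.restrict (Set.Ioo (0 : ℝ) 1))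
    -- `H` is the df of `R`, `H11` that of `W = R·S`, and `h11` the density of `W`
    (H H11 h11 : ℝ → ℝ)
    (hH : ∀ x, H x = (P {ω | R ω ≤ x}).toReal)
    (hH11 : ∀ x, H11 x = (P {ω | R ω * S ω ≤ x}).toReal)
    (hh11 : ∀ x : ℝ, 0 < x → h11 x = ∫ y in Set.Ioi x, y⁻¹ ∂(Measure.map R P))
    (hlim : Filter.Tendsto (fun x => x * h11 x / H11 x)
      (nhdsWithin 0 (Set.Ioi 0)) (nhds γ)) :
    RegVarAt0 H11 γ
    ∧ Filter.Tendsto (fun x => H x / H11 x) (nhdsWithin 0 (Set.Ioi 0)) (nhds (1 - γ))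
    ∧ RegVarAt0 H γ := by
  set μ := P.map R
  have : IsProbabilityMeasure μ := Measure.isProbabilityMeasure_map hR.aemeasurable
  have hμ : ∀ᵐ y ∂μ, 0 < y := (ae_map_iff hR.aemeasurable measurableSet_Ioi).2 hRpos
  have hH11μ : ∀ x, 0 < x → H11 x = cdfMulUniform μ x := fun x hx =>
    (hH11 x).trans (measure_mul_le_eq_cdfMulUniform hR hS hRpos hind hSlaw hx.le)
  have hpos : ∀ x, 0 < x → 0 < H11 x := fun x hx => hH11μ x hx ▸ cdfMulUniform_pos hμ hx
  have hregvar : RegVarAt0 H11 γ := by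
    refine regVarAt0_of_tendsto_mul_deriv_div hpos
      ((continuousOn_cdfMulUniform hμ).congr fun x hx => hH11μ x hx) (fun x hx => ?_) hlim
    rw [hh11 x hx]
    exact (hasDerivWithinAt_cdfMulUniform hμ hx).congr
      (fun y hy => hH11μ y (hx.trans_le hy)) (hH11μ x hx)
  have hratio : Tendsto (fun x => H x / H11 x) (𝓝[>] 0) (𝓝 (1 - γ)) := by
    refine (tendsto_const_nhds.sub hlim).congr' ?_
    filter_upwards [self_mem_nhdsWithin] with x (hx : 0 < x)
    have hsplit := cdfMulUniform_eq_add hμ hx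
    rw [← hH11μ x hx, ← hh11 x hx] at hsplit
    have hHx : H x = μ.real (Iic x) := by
      rw [hH x, measureReal_def, Measure.map_apply hR measurableSet_Iic]
      rfl
    rw [hHx, eq_div_iff (hpos x hx).ne', sub_mul, div_mul_cancel₀ _ (hpos x hx).ne', one_mul]
    linarith
  exact ⟨hregvar, hratio, hregvar.of_tendsto_div (sub_ne_zero.2 hγ.2.ne') hratio⟩
end
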